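/- arXiv:1101.3963 — 6 statements merged into one kernel-verified Lean document; each statement's English description precedes it below -/
import Mathlib

section
/- Suppose: (A) ‖F(u,t) − A(u(t))‖ ≤ f(∫₀ᵗ γ(‖u(s)‖) ds) for all continuous u : [0,T] → E₁ and t ∈ [0,T]; for each t ∈ [0,T] the map u ↦ F(u,t) is Fréchet differentiable on C([0,T],E₁) with derivative F_u(u,t); f and γ are continuously differentiable with monotone increasing derivatives f′ and γ′; and (E) for every t ∈ [0,T], every continuous u and every V ∈ C([0,T],E₁), ‖F_u(u,t)V − A(V(t))‖ ≤ f′(∫₀ᵗ γ(‖u(s)‖) ds) · ∫₀ᵗ γ′(‖u(s)‖) ‖V(s)‖ ds. Then condition (D) holds: for all continuous u, Δu and all t ∈ [0,T], ‖F(u+Δu,t) − F(u,t) − A(Δu(t))‖ ≤ f(∫₀ᵗ γ(‖u(s)‖+‖Δu(s)‖) ds) − f(∫₀ᵗ γ(‖u(s)‖) ds). -/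
/-!
Along the segment `θ ↦ u + θ • Δu` the defect `g θ = F(u + θΔu, t) - F(u, t) - θ A(Δu(t))`
has derivative `F_u(u + θΔu, t) Δu - A(Δu(t))`. Condition (E), the pointwise bound
`‖u + θΔu‖ ≤ ‖u‖ + θ‖Δu‖` and the monotonicity of `f'`, `γ`, `γ'` bound its norm by the right
derivative of `B θ = f(∫₀ᵗ γ(‖u‖ + θ‖Δu‖))`. Since `g 0 = 0`, the comparison principle for right
derivatives gives `‖g 1‖ ≤ B 1 - B 0`, which is (D).
-/

open Set

lemma HasDerivWithinAt.nonneg_of_monotoneOn_Ici {g : ℝ → ℝ} {g' a x : ℝ}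
    (hd : HasDerivWithinAt g g' (Ici a) x) (hx : a ≤ x) (hg : MonotoneOn g (Ici a)) : 0 ≤ g' :=
  hd.nonneg_of_monotoneOn (accPt_principal_iff_nhdsWithin.2 <| (nhdsGT_neBot x).mono <|
    nhdsWithin_mono x fun _ hy => ⟨hx.trans (le_of_lt hy), ne_of_gt hy⟩) hg

/-- Differentiation under the integral sign needs two-sided derivatives, so a function that is
only right-differentiable on `[0, ∞)` is continued to `ℝ` by its tangent line at `0`. -/
noncomputable def tangentExtend (g g' : ℝ → ℝ) (x : ℝ) : ℝ :=
  if 0 ≤ x then g x else g 0 + g' 0 * x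

lemma tangentExtend_of_nonneg {g g' : ℝ → ℝ} {x : ℝ} (hx : 0 ≤ x) :
    tangentExtend g g' x = g x :=
  if_pos hx

lemma tangentExtend_of_nonpos {g g' : ℝ → ℝ} {x : ℝ} (hx : x ≤ 0) :
    tangentExtend g g' x = g 0 + g' 0 * x := by
  unfold tangentExtend
  split_ifs with h
  · rw [le_antisymm hx h, mul_zero, add_zero]
  · rfl

lemma hasDerivAt_tangentExtend {g g' : ℝ → ℝ}
    (hg : ∀ x ∈ Ici (0 : ℝ), HasDerivWithinAt g (g' x) (Ici 0) x) (x : ℝ) :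
    HasDerivAt (tangentExtend g g') (g' (max x 0)) x := by
  have hright : HasDerivWithinAt (tangentExtend g g') (g' (max x 0)) (Ici 0) x := by
    by_cases hx : 0 ≤ x
    · rw [max_eq_left hx]
      exact (hg x hx).congr (fun y hy => tangentExtend_of_nonneg hy) (tangentExtend_of_nonneg hx)
    · have hx' : x ∉ closure (Ici (0 : ℝ)) := by simpa using hx
      exact hasDerivWithinAt_iff_hasFDerivWithinAt.2 (.of_notMem_closure hx')
  have hleft : HasDerivWithinAt (tangentExtend g g') (g' (max x 0)) (Iic 0) x := by
    by_cases hx : x ≤ 0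
    · rw [max_eq_right hx]
      have hline : HasDerivAt (fun y => g 0 + g' 0 * y) (g' 0) x := by
        simpa using ((hasDerivAt_id x).const_mul (g' 0)).const_add (g 0)
      exact hline.hasDerivWithinAt.congr (fun y hy => tangentExtend_of_nonpos hy)
        (tangentExtend_of_nonpos hx)
    · have hx' : x ∉ closure (Iic (0 : ℝ)) := by simpa using hx
      exact hasDerivWithinAt_iff_hasFDerivWithinAt.2 (.of_notMem_closure hx')
  simpa [Iic_union_Ici] using hleft.union hright

lemma hasDerivAt_intervalIntegral_comp_add_mul {Γ Γ' U D : ℝ → ℝ}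
    (hΓ : ∀ x, HasDerivAt Γ (Γ' x) x) (hΓ' : Continuous Γ') (hU : Continuous U)
    (hD : Continuous D) (a b θ₀ : ℝ) :
    HasDerivAt (fun θ => ∫ s in a..b, Γ (U s + θ * D s))
      (∫ s in a..b, Γ' (U s + θ₀ * D s) * D s) θ₀ := by
  have hΓc : Continuous Γ := continuous_iff_continuousAt.2 fun x => (hΓ x).continuousAt
  obtain ⟨C, hC⟩ := (isCompact_uIcc.prod (isCompact_closedBall θ₀ 1)).exists_bound_of_continuousOn
    (f := fun p : ℝ × ℝ => Γ' (U p.1 + p.2 * D p.1) * D p.1) (by fun_prop)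
  refine (intervalIntegral.hasDerivAt_integral_of_dominated_loc_of_deriv_le
    (F := fun θ s => Γ (U s + θ * D s)) (F' := fun θ s => Γ' (U s + θ * D s) * D s)
    (bound := fun _ => C) (Metric.ball_mem_nhds θ₀ zero_lt_one)
    (.of_forall fun θ => (by fun_prop : Continuous _).aestronglyMeasurable)
    ((by fun_prop : Continuous _).intervalIntegrable _ _)
    (by fun_prop : Continuous _).aestronglyMeasurable ?_ intervalIntegrable_const
    (.of_forall fun s _ θ _ => ?_)).2
  · exact .of_forall fun s hs θ hθ =>
      hC (s, θ) ⟨uIoc_subset_uIcc hs, Metric.ball_subset_closedBall hθ⟩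
  · exact (hΓ _).comp θ ((hasDerivAt_mul_const (D s)).const_add (U s))

lemma hasDerivWithinAt_intervalIntegral_comp_add_mul {γ γ' U D : ℝ → ℝ}
    (hγ : ∀ x ∈ Ici (0 : ℝ), HasDerivWithinAt γ (γ' x) (Ici 0) x)
    (hγ' : ContinuousOn γ' (Ici 0)) (hU : Continuous U) (hD : Continuous D)
    (hU₀ : ∀ s, 0 ≤ U s) (hD₀ : ∀ s, 0 ≤ D s) (a b : ℝ) {θ₀ : ℝ} (hθ₀ : 0 ≤ θ₀) :
    HasDerivWithinAt (fun θ => ∫ s in a..b, γ (U s + θ * D s))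
      (∫ s in a..b, γ' (U s + θ₀ * D s) * D s) (Ici 0) θ₀ := by
  have harg : ∀ {θ : ℝ}, 0 ≤ θ → ∀ s, 0 ≤ U s + θ * D s := fun hθ s =>
    add_nonneg (hU₀ s) (mul_nonneg hθ (hD₀ s))
  have hext := hasDerivAt_intervalIntegral_comp_add_mul (hasDerivAt_tangentExtend hγ)
    (hγ'.comp_continuous (continuous_id.max continuous_const) fun x => le_max_right x 0)
    hU hD a b θ₀
  simp only [max_eq_left (harg hθ₀ _)] at hext
  have hγ_eq : ∀ θ ∈ Ici (0 : ℝ),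
      ∫ s in a..b, γ (U s + θ * D s) = ∫ s in a..b, tangentExtend γ γ' (U s + θ * D s) :=
    fun θ hθ => intervalIntegral.integral_congr fun s _ =>
      (tangentExtend_of_nonneg (harg hθ s)).symm
  exact hext.hasDerivWithinAt.congr hγ_eq (hγ_eq θ₀ hθ₀)

lemma intervalIntegral_comp_mul_le_of_le {φ P Q W : ℝ → ℝ} (hφm : MonotoneOn φ (Ici 0))
    (hφc : ContinuousOn φ (Ici 0)) (hP : Continuous P) (hQ : Continuous Q) (hW : Continuous W)
    (hP₀ : ∀ s, 0 ≤ P s) (hPQ : ∀ s, P s ≤ Q s) (hW₀ : ∀ s, 0 ≤ W s) {t : ℝ} (ht : 0 ≤ t) :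
    ∫ s in 0..t, φ (P s) * W s ≤ ∫ s in 0..t, φ (Q s) * W s := by
  have hQ₀ : ∀ s, 0 ≤ Q s := fun s => (hP₀ s).trans (hPQ s)
  refine intervalIntegral.integral_mono_on ht
    (((hφc.comp_continuous hP hP₀).mul hW).intervalIntegrable _ _)
    (((hφc.comp_continuous hQ hQ₀).mul hW).intervalIntegrable _ _) fun s _ => ?_
  exact mul_le_mul_of_nonneg_right (hφm (hP₀ s) (hQ₀ s) (hPQ s)) (hW₀ s)

lemma mul_intervalIntegral_le_of_le {f' γ γ' P Q D : ℝ → ℝ} (hf'm : MonotoneOn f' (Ici 0))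
    (hf'₀ : ∀ x ∈ Ici (0 : ℝ), 0 ≤ f' x) (hγm : MonotoneOn γ (Ici 0))
    (hγc : ContinuousOn γ (Ici 0)) (hγ₀ : ∀ x ∈ Ici (0 : ℝ), 0 ≤ γ x)
    (hγ'm : MonotoneOn γ' (Ici 0)) (hγ'c : ContinuousOn γ' (Ici 0))
    (hγ'₀ : ∀ x ∈ Ici (0 : ℝ), 0 ≤ γ' x) (hP : Continuous P) (hQ : Continuous Q)
    (hD : Continuous D) (hP₀ : ∀ s, 0 ≤ P s) (hPQ : ∀ s, P s ≤ Q s) (hD₀ : ∀ s, 0 ≤ D s)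
    {t : ℝ} (ht : 0 ≤ t) :
    f' (∫ s in 0..t, γ (P s)) * ∫ s in 0..t, γ' (P s) * D s ≤
      f' (∫ s in 0..t, γ (Q s)) * ∫ s in 0..t, γ' (Q s) * D s := by
  have hγPQ : ∫ s in 0..t, γ (P s) ≤ ∫ s in 0..t, γ (Q s) := by
    simpa using intervalIntegral_comp_mul_le_of_le hγm hγc hP hQ continuous_const hP₀ hPQ
      (fun _ => zero_le_one) ht
  have hγP₀ : 0 ≤ ∫ s in 0..t, γ (P s) :=
    intervalIntegral.integral_nonneg ht fun s _ => hγ₀ _ (hP₀ s)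
  exact mul_le_mul (hf'm hγP₀ (hγP₀.trans hγPQ) hγPQ)
    (intervalIntegral_comp_mul_le_of_le hγ'm hγ'c hP hQ hD hP₀ hPQ hD₀ ht)
    (intervalIntegral.integral_nonneg ht fun s _ => mul_nonneg (hγ'₀ _ (hP₀ s)) (hD₀ s))
    (hf'₀ _ (hγP₀.trans hγPQ))

lemma hasDerivAt_apply_add_smul_sub {X Y : Type*} [NormedAddCommGroup X] [NormedSpace ℝ X]
    [NormedAddCommGroup Y] [NormedSpace ℝ Y] {Φ : X → Y} {Φ' : X → X →L[ℝ] Y}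
    (hΦ : ∀ x, HasFDerivAt Φ (Φ' x) x) (u v : X) (y : Y) (θ : ℝ) :
    HasDerivAt (fun θ : ℝ => Φ (u + θ • v) - Φ u - θ • y) (Φ' (u + θ • v) v - y) θ := by
  have hseg : HasDerivAt (fun θ : ℝ => u + θ • v) v θ := by
    simpa using ((hasDerivAt_id' θ).smul_const v).const_add u
  have h := (((hΦ _).comp_hasDerivAt θ hseg).sub_const (Φ u)).sub ((hasDerivAt_id' θ).smul_const y)
  rwa [one_smul] at h

lemma norm_le_sub_of_norm_deriv_le {E : Type*} [NormedAddCommGroup E] [NormedSpace ℝ E]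
    {g g' : ℝ → E} {B B' : ℝ → ℝ} (hg : ∀ θ, HasDerivAt g (g' θ) θ) (hg₀ : g 0 = 0)
    (hB : ∀ θ ∈ Ici (0 : ℝ), HasDerivWithinAt B (B' θ) (Ici 0) θ)
    (hgB : ∀ θ ∈ Ici (0 : ℝ), ‖g' θ‖ ≤ B' θ) : ‖g 1‖ ≤ B 1 - B 0 :=
  image_norm_le_of_norm_deriv_right_le_deriv_boundary' (B := fun θ => B θ - B 0)
    (fun θ _ => (hg θ).continuousAt.continuousWithinAt) (fun θ _ => (hg θ).hasDerivWithinAt)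
    (by simp [hg₀])
    (fun θ hθ => ((hB θ hθ.1).continuousWithinAt.mono Icc_subset_Ici_self).sub
      continuousWithinAt_const)
    (fun θ hθ => ((hB θ hθ.1).mono (Ici_subset_Ici.2 hθ.1)).sub_const _)
    (fun θ hθ => hgB θ hθ.1) (right_mem_Icc.2 zero_le_one)

theorem stmt_1_general
    {E₁ E₂ : Type*} [NormedAddCommGroup E₁] [NormedSpace ℝ E₁]
    [NormedAddCommGroup E₂] [NormedSpace ℝ E₂]
    (T : ℝ) (hT : 0 < T)
    (A : E₁ →L[ℝ] E₂)
    (F : C(Set.Icc (0:ℝ) T, E₁) → ℝ → E₂)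
    (f γ f' γ' : ℝ → ℝ)
    (hfm : MonotoneOn f (Set.Ici 0)) (hγm : MonotoneOn γ (Set.Ici 0))
    (hγnn : ∀ x ∈ Set.Ici (0:ℝ), 0 ≤ γ x)
    -- `f` and `γ` are continuously differentiable on `[0,∞)`
    (hfd : ∀ x ∈ Set.Ici (0:ℝ), HasDerivWithinAt f (f' x) (Set.Ici 0) x)
    (hγd : ∀ x ∈ Set.Ici (0:ℝ), HasDerivWithinAt γ (γ' x) (Set.Ici 0) x)
    (hγ'c : ContinuousOn γ' (Set.Ici 0))
    -- the derivatives `f'` and `γ'` are monotone increasing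
    (hf'm : MonotoneOn f' (Set.Ici 0)) (hγ'm : MonotoneOn γ' (Set.Ici 0))
    -- `F(·,t)` is Fréchet differentiable with derivative `F' u t`
    (F' : C(Set.Icc (0:ℝ) T, E₁) → ℝ → (C(Set.Icc (0:ℝ) T, E₁) →L[ℝ] E₂))
    (hFd : ∀ (u : C(Set.Icc (0:ℝ) T, E₁)) (t : Set.Icc (0:ℝ) T),
      HasFDerivAt (fun v => F v (t : ℝ)) (F' u (t : ℝ)) u)
    -- condition (E)
    (condE : ∀ (u : C(Set.Icc (0:ℝ) T, E₁)) (t : Set.Icc (0:ℝ) T)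
      (V : C(Set.Icc (0:ℝ) T, E₁)),
      ‖F' u (t : ℝ) V - A (V t)‖ ≤
        f' (∫ s in (0:ℝ)..(t : ℝ), γ ‖u (Set.projIcc 0 T hT.le s)‖) *
          ∫ s in (0:ℝ)..(t : ℝ),
            γ' ‖u (Set.projIcc 0 T hT.le s)‖ * ‖V (Set.projIcc 0 T hT.le s)‖) :
    -- conclusion: condition (D)
    ∀ (u Δu : C(Set.Icc (0:ℝ) T, E₁)) (t : Set.Icc (0:ℝ) T),
      ‖F (u + Δu) (t : ℝ) - F u (t : ℝ) - A (Δu t)‖ ≤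
        f (∫ s in (0:ℝ)..(t : ℝ),
            γ (‖u (Set.projIcc 0 T hT.le s)‖ + ‖Δu (Set.projIcc 0 T hT.le s)‖)) -
        f (∫ s in (0:ℝ)..(t : ℝ), γ ‖u (Set.projIcc 0 T hT.le s)‖) := by
  intro u Δu t
  have ht : (0 : ℝ) ≤ t := t.2.1
  have hnorm : ∀ v : C(Icc (0 : ℝ) T, E₁), Continuous fun s => ‖v (projIcc 0 T hT.le s)‖ :=
    fun v => (v.continuous.comp continuous_projIcc).norm
  set U : ℝ → ℝ := fun s => ‖u (projIcc 0 T hT.le s)‖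
  set D : ℝ → ℝ := fun s => ‖Δu (projIcc 0 T hT.le s)‖
  set I : ℝ → ℝ := fun θ => ∫ s in (0 : ℝ)..t, γ (U s + θ * D s)
  have hI₀ : MapsTo I (Ici 0) (Ici 0) := fun θ hθ => intervalIntegral.integral_nonneg ht
    fun s _ => hγnn _ (add_nonneg (norm_nonneg _) (mul_nonneg hθ (norm_nonneg _)))
  have hfI : ∀ θ ∈ Ici (0 : ℝ), HasDerivWithinAt (fun θ => f (I θ))
      (f' (I θ) * ∫ s in (0 : ℝ)..t, γ' (U s + θ * D s) * D s) (Ici 0) θ := fun θ hθ =>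
    (hfd _ (hI₀ hθ)).comp θ (hasDerivWithinAt_intervalIntegral_comp_add_mul hγd hγ'c (hnorm u)
      (hnorm Δu) (fun _ => norm_nonneg _) (fun _ => norm_nonneg _) 0 t hθ) hI₀
  have hsegment : ∀ θ ∈ Ici (0 : ℝ), ∀ s, ‖(u + θ • Δu) (projIcc 0 T hT.le s)‖ ≤ U s + θ * D s :=
    fun θ hθ s => (norm_add_le _ _).trans_eq <| by
      rw [ContinuousMap.smul_apply, norm_smul, Real.norm_of_nonneg hθ]
  have hbound : ∀ θ ∈ Ici (0 : ℝ), ‖F' (u + θ • Δu) t Δu - A (Δu t)‖ ≤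
      f' (I θ) * ∫ s in (0 : ℝ)..t, γ' (U s + θ * D s) * D s := fun θ hθ =>
    (condE _ t Δu).trans <| mul_intervalIntegral_le_of_le hf'm
      (fun x hx => (hfd x hx).nonneg_of_monotoneOn_Ici hx hfm) hγm
      (fun x hx => (hγd x hx).continuousWithinAt) hγnn hγ'm hγ'c
      (fun x hx => (hγd x hx).nonneg_of_monotoneOn_Ici hx hγm) (hnorm _)
      ((hnorm u).add (continuous_const.mul (hnorm Δu))) (hnorm Δu) (fun _ => norm_nonneg _)
      (hsegment θ hθ) (fun _ => norm_nonneg _) ht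
  simpa [I, U, D] using norm_le_sub_of_norm_deriv_le
    (hasDerivAt_apply_add_smul_sub (fun v => hFd v t) u Δu (A (Δu t))) (by simp) hfI hbound

/-- **Lemma 1** (Sidorov–Sidorov). If `F(·,t)` is Fréchet differentiable on
`C([0,T],E₁)`, `f, γ` are continuously differentiable with monotone increasing
derivatives, and condition (E) holds, then condition (D) holds. -/
theorem stmt_1
    {E₁ E₂ : Type*} [NormedAddCommGroup E₁] [NormedSpace ℝ E₁] [CompleteSpace E₁]
    [NormedAddCommGroup E₂] [NormedSpace ℝ E₂] [CompleteSpace E₂]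
    (T : ℝ) (hT : 0 < T)
    (A : E₁ →L[ℝ] E₂) (Ainv : E₂ →L[ℝ] E₁)
    (hA₁ : ∀ x, Ainv (A x) = x) (hA₂ : ∀ y, A (Ainv y) = y)
    (F : C(Set.Icc (0:ℝ) T, E₁) → ℝ → E₂)
    (f γ f' γ' : ℝ → ℝ)
    (hfc : ContinuousOn f (Set.Ici 0)) (hγc : ContinuousOn γ (Set.Ici 0))
    (hfm : MonotoneOn f (Set.Ici 0)) (hγm : MonotoneOn γ (Set.Ici 0))
    (hfnn : ∀ x ∈ Set.Ici (0:ℝ), 0 ≤ f x) (hγnn : ∀ x ∈ Set.Ici (0:ℝ), 0 ≤ γ x)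
    -- `f` and `γ` are continuously differentiable on `[0,∞)`
    (hfd : ∀ x ∈ Set.Ici (0:ℝ), HasDerivWithinAt f (f' x) (Set.Ici 0) x)
    (hγd : ∀ x ∈ Set.Ici (0:ℝ), HasDerivWithinAt γ (γ' x) (Set.Ici 0) x)
    (hf'c : ContinuousOn f' (Set.Ici 0)) (hγ'c : ContinuousOn γ' (Set.Ici 0))
    -- the derivatives `f'` and `γ'` are monotone increasing
    (hf'm : MonotoneOn f' (Set.Ici 0)) (hγ'm : MonotoneOn γ' (Set.Ici 0))
    -- `F(·,t)` is Fréchet differentiable with derivative `F' u t`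
    (F' : C(Set.Icc (0:ℝ) T, E₁) → ℝ → (C(Set.Icc (0:ℝ) T, E₁) →L[ℝ] E₂))
    (hFd : ∀ (u : C(Set.Icc (0:ℝ) T, E₁)) (t : Set.Icc (0:ℝ) T),
      HasFDerivAt (fun v => F v (t : ℝ)) (F' u (t : ℝ)) u)
    -- condition (A)
    (condA : ∀ (u : C(Set.Icc (0:ℝ) T, E₁)) (t : Set.Icc (0:ℝ) T),
      ‖F u (t : ℝ) - A (u t)‖ ≤
        f (∫ s in (0:ℝ)..(t : ℝ), γ ‖u (Set.projIcc 0 T hT.le s)‖))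
    -- condition (E)
    (condE : ∀ (u : C(Set.Icc (0:ℝ) T, E₁)) (t : Set.Icc (0:ℝ) T)
      (V : C(Set.Icc (0:ℝ) T, E₁)),
      ‖F' u (t : ℝ) V - A (V t)‖ ≤
        f' (∫ s in (0:ℝ)..(t : ℝ), γ ‖u (Set.projIcc 0 T hT.le s)‖) *
          ∫ s in (0:ℝ)..(t : ℝ),
            γ' ‖u (Set.projIcc 0 T hT.le s)‖ * ‖V (Set.projIcc 0 T hT.le s)‖) :
    -- conclusion: condition (D)
    ∀ (u Δu : C(Set.Icc (0:ℝ) T, E₁)) (t : Set.Icc (0:ℝ) T),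
      ‖F (u + Δu) (t : ℝ) - F u (t : ℝ) - A (Δu t)‖ ≤
        f (∫ s in (0:ℝ)..(t : ℝ),
            γ (‖u (Set.projIcc 0 T hT.le s)‖ + ‖Δu (Set.projIcc 0 T hT.le s)‖)) -
        f (∫ s in (0:ℝ)..(t : ℝ), γ ‖u (Set.projIcc 0 T hT.le s)‖) :=
  stmt_1_general T hT A F f γ f' γ' hfm hγm hγnn hfd hγd hγ'c hf'm hγ'm F' hFd condE
end

section
/- Let g : [0,∞) → ℝ be continuous, strictly positive and monotone increasing, and suppose the improper integral T⁺ = ∫₀^∞ dσ/g(σ) is finite. Then the Cauchy problem ω′(t) = g(ω(t)), ω(0) = 0 has a monotone increasing solution ω⁺ : [0,T⁺) → [0,∞); the iterates ω₀ = 0, ω_n(t) = ∫₀ᵗ g(ω_{n−1}(s)) ds converge to ω⁺(t) for every t ∈ [0,T⁺); and ω⁺(t) → ∞ as t → T⁺ (the solution blows up at the finite time T⁺). -/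
open Set Filter Function MeasureTheory intervalIntegral
open scoped Topology

/-!
Separation of variables. With `Φ(ω) = ∫₀^ω dσ/g(σ)`, every solution of `ω' = g(ω)`, `ω(0) = 0`
satisfies `(Φ ∘ ω)' = 1`, hence `Φ(ω(t)) = t`; as `g > 0`, `Φ` is strictly increasing from `0`
to `T⁺`, so `ω⁺ = Φ⁻¹` is the solution on `[0, T⁺)` and it tends to `∞` at `T⁺`. Because `g` is
increasing, the iterates `ω_n` increase with `n` and stay below the fixed point `ω⁺`; by dominated
convergence their limit solves the integral equation, so it is `ω⁺`.
-/

section invFun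

variable {f : ℝ → ℝ} {T t : ℝ}

theorem apply_invFun_of_lt (hrange : range f = Iio T) (ht : t < T) : f (invFun f t) = t :=
  invFun_eq (show t ∈ range f from hrange ▸ ht)

namespace StrictMono

theorem range_eq_Iio_of_tendsto (hf : StrictMono f) (hfc : Continuous f)
    (hbot : Tendsto f atBot atBot) (htop : Tendsto f atTop (𝓝 T)) : range f = Iio T := by
  refine Subset.antisymm (range_subset_iff.2 fun x => ?_) fun t ht => ?_
  · exact (hf (lt_add_one x)).trans_le (hf.monotone.ge_of_tendsto htop _)
  · exact mem_range_of_exists_le_of_exists_ge hfc (hbot.eventually_le_atBot t).exists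
      ((htop.eventually (eventually_ge_nhds ht)).exists)

theorem monotoneOn_invFun (hf : StrictMono f) (hrange : range f = Iio T) :
    MonotoneOn (invFun f) (Iio T) := fun s hs t ht hst =>
  hf.le_iff_le.1 <| by rwa [apply_invFun_of_lt hrange hs, apply_invFun_of_lt hrange ht]

theorem continuousAt_invFun (hf : StrictMono f) (hrange : range f = Iio T) (ht : t < T) :
    ContinuousAt (invFun f) t := by
  refine continuousAt_of_monotoneOn_of_image_mem_nhds (hf.monotoneOn_invFun hrange)
    (Iio_mem_nhds ht) ?_
  rw [← hrange, ← range_comp, (leftInverse_invFun hf.injective).comp_eq_id, range_id]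
  exact univ_mem

theorem hasDerivAt_invFun (hf : StrictMono f) (hrange : range f = Iio T) {f' : ℝ}
    (hderiv : HasDerivAt f f' (invFun f t)) (hf' : f' ≠ 0) (ht : t < T) :
    HasDerivAt (invFun f) f'⁻¹ t :=
  hderiv.of_local_left_inverse (hf.continuousAt_invFun hrange ht) hf'
    (eventually_of_mem (Iio_mem_nhds ht) fun _ hs => apply_invFun_of_lt hrange hs)

theorem tendsto_invFun_nhdsLT (hf : StrictMono f) (hrange : range f = Iio T) :
    Tendsto (invFun f) (𝓝[<] T) atTop := by
  refine Filter.tendsto_atTop.2 fun b => ?_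
  have hb : f b ∈ Iio T := hrange ▸ mem_range_self b
  filter_upwards [self_mem_nhdsWithin, mem_nhdsWithin_of_mem_nhds (Ioi_mem_nhds hb)]
    with t ht hbt
  exact hf.le_iff_le.1 (by rw [apply_invFun_of_lt hrange ht]; exact le_of_lt hbt)

end StrictMono

end invFun

/-- The time a solution of `ω' = h(ω)` started at `0` takes to reach `ω`. -/
noncomputable def timeMap (h : ℝ → ℝ) (ω : ℝ) : ℝ := ∫ σ in (0:ℝ)..ω, 1 / h σ

section timeMap

variable {h : ℝ → ℝ}

theorem hasDerivAt_timeMap (hc : Continuous h) (hpos : ∀ x, 0 < h x) (ω : ℝ) :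
    HasDerivAt (timeMap h) (1 / h ω) ω := by
  have hc' : Continuous fun σ => 1 / h σ := continuous_const.div hc fun x => (hpos x).ne'
  exact integral_hasDerivAt_right (hc'.intervalIntegrable _ _)
    hc'.aestronglyMeasurable.stronglyMeasurableAtFilter hc'.continuousAt

theorem continuous_timeMap (hc : Continuous h) (hpos : ∀ x, 0 < h x) : Continuous (timeMap h) :=
  continuous_iff_continuousAt.2 fun ω => (hasDerivAt_timeMap hc hpos ω).continuousAt

theorem strictMono_timeMap (hc : Continuous h) (hpos : ∀ x, 0 < h x) : StrictMono (timeMap h) :=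
  strictMono_of_hasDerivAt_pos (hasDerivAt_timeMap hc hpos) fun x => one_div_pos.2 (hpos x)

theorem tendsto_timeMap_atBot (hc : Continuous h) (hpos : ∀ x, 0 < h x) {M : ℝ}
    (hM : ∀ x ≤ 0, h x ≤ M) : Tendsto (timeMap h) atBot atBot := by
  have hM0 : 0 < M := (hpos 0).trans_le (hM 0 le_rfl)
  refine tendsto_atBot_mono' atBot ?_ (tendsto_id.atBot_div_const hM0)
  filter_upwards [eventually_le_atBot 0] with ω hω
  have hc' : Continuous fun σ => 1 / h σ := continuous_const.div hc fun x => (hpos x).ne'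
  have hlow : ∫ _ in ω..0, 1 / M ≤ ∫ σ in ω..0, 1 / h σ :=
    integral_mono_on hω intervalIntegrable_const (hc'.intervalIntegrable _ _)
      fun σ hσ => one_div_le_one_div_of_le (hpos σ) (hM σ hσ.2)
  rw [intervalIntegral.integral_const, smul_eq_mul] at hlow
  rw [timeMap, integral_symm, id, div_eq_mul_one_div]
  linarith

end timeMap

noncomputable def picard (g v : ℝ → ℝ) (t : ℝ) : ℝ := ∫ s in (0:ℝ)..t, g (v s)

section picard

variable {g v w : ℝ → ℝ} {t : ℝ}

theorem picard_congr {f : ℝ → ℝ} (ht : 0 ≤ t) (hfg : ∀ s ∈ Icc 0 t, f (v s) = g (v s)) :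
    picard f v t = picard g v t :=
  integral_congr fun s hs => hfg s (uIcc_of_le ht ▸ hs)

theorem intervalIntegrable_comp_of_monotoneOn (hgm : MonotoneOn g (Ici 0)) (ht : 0 ≤ t)
    (hv : MonotoneOn v (Icc 0 t)) (hv0 : ∀ s ∈ Icc 0 t, 0 ≤ v s) :
    IntervalIntegrable (fun s => g (v s)) volume 0 t :=
  MonotoneOn.intervalIntegrable (by rw [uIcc_of_le ht]; exact hgm.comp hv hv0)

theorem picard_le_picard (hgm : MonotoneOn g (Ici 0)) (ht : 0 ≤ t)
    (hv : MonotoneOn v (Icc 0 t)) (hw : MonotoneOn w (Icc 0 t)) (hv0 : ∀ s ∈ Icc 0 t, 0 ≤ v s)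
    (hvw : ∀ s ∈ Icc 0 t, v s ≤ w s) : picard g v t ≤ picard g w t :=
  have hw0 : ∀ s ∈ Icc 0 t, 0 ≤ w s := fun s hs => (hv0 s hs).trans (hvw s hs)
  integral_mono_on ht (intervalIntegrable_comp_of_monotoneOn hgm ht hv hv0)
    (intervalIntegrable_comp_of_monotoneOn hgm ht hw hw0)
    fun s hs => hgm (hv0 s hs) (hw0 s hs) (hvw s hs)

theorem monotoneOn_picard (hg0 : ∀ x ∈ Ici 0, 0 ≤ g x) (hgm : MonotoneOn g (Ici 0))
    (hv : MonotoneOn v (Ici 0)) (hv0 : ∀ s ∈ Ici 0, 0 ≤ v s) :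
    MonotoneOn (picard g v) (Ici 0) :=
  fun _ ha _ hb hab =>
  integral_mono_interval le_rfl ha hab
    ((ae_restrict_iff' measurableSet_Ioc).2 (ae_of_all _ fun s hs => hg0 _ (hv0 s hs.1.le)))
    (intervalIntegrable_comp_of_monotoneOn hgm hb (hv.mono Icc_subset_Ici_self)
      fun s hs => hv0 s hs.1)

theorem continuousOn_picard (hgm : MonotoneOn g (Ici 0)) (ht : 0 ≤ t)
    (hv : MonotoneOn v (Icc 0 t)) (hv0 : ∀ s ∈ Icc 0 t, 0 ≤ v s) :
    ContinuousOn (picard g v) (Icc 0 t) := by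
  have hint : IntegrableOn (fun s => g (v s)) (uIcc 0 t) := by
    rw [uIcc_of_le ht]
    exact (hgm.comp hv hv0).integrableOn_isCompact isCompact_Icc
  have hprim := continuousOn_primitive_interval hint
  rwa [uIcc_of_le ht] at hprim

theorem tendsto_picard {v : ℕ → ℝ → ℝ} {M : ℝ} (hgc : ContinuousOn g (Ici 0))
    (hg0 : ∀ x ∈ Ici 0, 0 ≤ g x) (hgm : MonotoneOn g (Ici 0)) (ht : 0 ≤ t)
    (hv : ∀ n, MonotoneOn (v n) (Icc 0 t)) (hv0 : ∀ n, ∀ s ∈ Icc 0 t, 0 ≤ v n s)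
    (hM : ∀ n, v n t ≤ M)
    (hlim : ∀ s ∈ Icc 0 t, Tendsto (fun n => v n s) atTop (𝓝 (w s))) :
    Tendsto (fun n => picard g (v n) t) atTop (𝓝 (picard g w t)) := by
  have hIcc : ∀ {s}, s ∈ uIoc 0 t → s ∈ Icc 0 t := fun hs =>
    Ioc_subset_Icc_self (uIoc_of_le ht ▸ hs)
  have htt : t ∈ Icc 0 t := ⟨ht, le_rfl⟩
  refine tendsto_integral_filter_of_dominated_convergence (fun _ => g M)
    (Eventually.of_forall fun n => ?_) (Eventually.of_forall fun n => ae_of_all _ fun s hs => ?_)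
    intervalIntegrable_const (ae_of_all _ fun s hs => ?_)
  · exact (intervalIntegrable_comp_of_monotoneOn hgm ht (hv n) (hv0 n)).def'.aestronglyMeasurable
  · have hvs : v n s ≤ M := (hv n (hIcc hs) htt (hIcc hs).2).trans (hM n)
    rw [Real.norm_of_nonneg (hg0 _ (hv0 n s (hIcc hs)))]
    exact hgm (hv0 n s (hIcc hs)) ((hv0 n s (hIcc hs)).trans hvs) hvs
  · have hw0 : 0 ≤ w s := ge_of_tendsto' (hlim s (hIcc hs)) fun n => hv0 n s (hIcc hs)
    exact (hgc _ hw0).tendsto.comp <| tendsto_nhdsWithin_iff.2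
      ⟨hlim s (hIcc hs), Eventually.of_forall fun n => hv0 n s (hIcc hs)⟩

theorem hasDerivAt_of_eqOn_picard {g u : ℝ → ℝ} {c x : ℝ}
    (hgu : ContinuousOn (fun s => g (u s)) (Icc 0 c)) (hfix : EqOn u (picard g u) (Icc 0 c))
    (hx : x ∈ Ioo 0 c) : HasDerivAt u (g (u x)) x := by
  have hnhds : Icc 0 c ∈ 𝓝 x := Icc_mem_nhds hx.1 hx.2
  have hderiv : HasDerivAt (picard g u) (g (u x)) x :=
    integral_hasDerivAt_right
      ((hgu.mono (Icc_subset_Icc_right hx.2.le)).intervalIntegrable_of_Icc hx.1.le)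
      ((hgu.mono Ioo_subset_Icc_self).stronglyMeasurableAtFilter isOpen_Ioo x hx)
      (hgu.continuousAt hnhds)
  exact hderiv.congr_of_eventuallyEq (eventually_of_mem hnhds hfix)

end picard

theorem timeMap_eq_of_eqOn_picard {h u : ℝ → ℝ} {c : ℝ} (hc : Continuous h)
    (hpos : ∀ x, 0 < h x) (hc0 : 0 ≤ c) (hu : ContinuousOn u (Icc 0 c))
    (hfix : EqOn u (picard h u) (Icc 0 c)) :
    timeMap h (u c) = c := by
  have hu0 : u 0 = 0 := (hfix ⟨le_rfl, hc0⟩).trans integral_same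
  have hhu : ContinuousOn (fun s => h (u s)) (Icc 0 c) := hc.comp_continuousOn hu
  -- substitute `σ = u s` in `∫ σ in 0..u c, 1 / h σ`, using `u' = h ∘ u`
  have hsubst := integral_comp_mul_deriv'' (f := u) (f' := fun s => h (u s))
    (g := fun σ => 1 / h σ) (by rwa [uIcc_of_le hc0])
    (fun x hx => by
      rw [min_eq_left hc0, max_eq_right hc0] at hx
      exact (hasDerivAt_of_eqOn_picard hhu hfix hx).hasDerivWithinAt)
    (by rwa [uIcc_of_le hc0]) ((continuous_const.div hc fun x => (hpos x).ne').continuousOn)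
  calc timeMap h (u c) = ∫ σ in u 0..u c, 1 / h σ := by rw [hu0, timeMap]
    _ = ∫ s in (0:ℝ)..c, 1 / h (u s) * h (u s) := hsubst.symm
    _ = ∫ _ in (0:ℝ)..c, (1:ℝ) := integral_congr fun s _ => one_div_mul_cancel (hpos _).ne'
    _ = c := by simp

/-- Continuing `g` constantly to the left of `0` makes `timeMap` a bijection of `ℝ` onto
`(-∞, T⁺)`, so that its inverse is differentiable at `0` as well. -/
def extendLeft (g : ℝ → ℝ) (x : ℝ) : ℝ := g (max x 0)

noncomputable def blowupSolution (g : ℝ → ℝ) : ℝ → ℝ := invFun (timeMap (extendLeft g))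

section blowupSolution

variable {g : ℝ → ℝ} {T t : ℝ}

theorem extendLeft_of_nonneg {x : ℝ} (hx : 0 ≤ x) : extendLeft g x = g x := by
  rw [extendLeft, max_eq_left hx]

theorem extendLeft_of_nonpos {x : ℝ} (hx : x ≤ 0) : extendLeft g x = g 0 := by
  rw [extendLeft, max_eq_right hx]

theorem continuous_extendLeft (hgc : ContinuousOn g (Ici 0)) : Continuous (extendLeft g) :=
  hgc.comp_continuous (continuous_id.max continuous_const) fun x => le_max_right x 0

theorem extendLeft_pos (hgpos : ∀ x ∈ Ici 0, 0 < g x) (x : ℝ) : 0 < extendLeft g x :=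
  hgpos _ (le_max_right x 0)

theorem strictMono_timeMap_extendLeft (hgc : ContinuousOn g (Ici 0))
    (hgpos : ∀ x ∈ Ici 0, 0 < g x) : StrictMono (timeMap (extendLeft g)) :=
  strictMono_timeMap (continuous_extendLeft hgc) (extendLeft_pos hgpos)

theorem range_timeMap_extendLeft (hgc : ContinuousOn g (Ici 0)) (hgpos : ∀ x ∈ Ici 0, 0 < g x)
    (hT : Tendsto (fun ω => ∫ σ in (0:ℝ)..ω, 1 / g σ) atTop (𝓝 T)) :
    range (timeMap (extendLeft g)) = Iio T := by
  have hc := continuous_extendLeft hgc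
  have hpos := extendLeft_pos hgpos
  refine (strictMono_timeMap hc hpos).range_eq_Iio_of_tendsto (continuous_timeMap hc hpos)
    (tendsto_timeMap_atBot hc hpos fun x hx => (extendLeft_of_nonpos hx).le) (hT.congr' ?_)
  filter_upwards [eventually_ge_atTop 0] with ω hω
  exact integral_congr fun σ hσ => by
    rw [one_div, one_div, extendLeft_of_nonneg (uIcc_of_le hω ▸ hσ).1]

theorem blowupSolution_zero (hgc : ContinuousOn g (Ici 0)) (hgpos : ∀ x ∈ Ici 0, 0 < g x) :
    blowupSolution g 0 = 0 := by
  have := leftInverse_invFun (strictMono_timeMap_extendLeft hgc hgpos).injective 0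
  rwa [timeMap, integral_same] at this

theorem timeMap_blowupSolution (hrange : range (timeMap (extendLeft g)) = Iio T) (ht : t < T) :
    timeMap (extendLeft g) (blowupSolution g t) = t :=
  apply_invFun_of_lt hrange ht

theorem monotoneOn_blowupSolution (hgc : ContinuousOn g (Ici 0)) (hgpos : ∀ x ∈ Ici 0, 0 < g x)
    (hrange : range (timeMap (extendLeft g)) = Iio T) : MonotoneOn (blowupSolution g) (Iio T) :=
  (strictMono_timeMap_extendLeft hgc hgpos).monotoneOn_invFun hrange

theorem blowupSolution_nonneg (hgc : ContinuousOn g (Ici 0)) (hgpos : ∀ x ∈ Ici 0, 0 < g x)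
    (hrange : range (timeMap (extendLeft g)) = Iio T) (ht : t ∈ Ico 0 T) :
    0 ≤ blowupSolution g t :=
  blowupSolution_zero hgc hgpos ▸ monotoneOn_blowupSolution hgc hgpos hrange
    (ht.1.trans_lt ht.2) ht.2 ht.1

theorem hasDerivAt_blowupSolution (hgc : ContinuousOn g (Ici 0))
    (hgpos : ∀ x ∈ Ici 0, 0 < g x) (hrange : range (timeMap (extendLeft g)) = Iio T)
    (ht : t ∈ Ico 0 T) : HasDerivAt (blowupSolution g) (g (blowupSolution g t)) t := by
  have hderiv : HasDerivAt (blowupSolution g) (1 / extendLeft g (blowupSolution g t))⁻¹ t :=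
    (strictMono_timeMap_extendLeft hgc hgpos).hasDerivAt_invFun hrange
    (hasDerivAt_timeMap (continuous_extendLeft hgc) (extendLeft_pos hgpos) _)
    (one_div_pos.2 (extendLeft_pos hgpos _)).ne' ht.2
  rwa [one_div, inv_inv, extendLeft_of_nonneg (blowupSolution_nonneg hgc hgpos hrange ht)]
    at hderiv

theorem eqOn_picard_blowupSolution (hgc : ContinuousOn g (Ici 0))
    (hgpos : ∀ x ∈ Ici 0, 0 < g x) (hgm : MonotoneOn g (Ici 0))
    (hrange : range (timeMap (extendLeft g)) = Iio T) :
    EqOn (blowupSolution g) (picard g (blowupSolution g)) (Ico 0 T) := by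
  intro t ht
  have hsub : Icc 0 t ⊆ Ico 0 T := Icc_subset_Ico_right ht.2
  have hftc := integral_eq_sub_of_hasDerivAt
    (fun s hs => hasDerivAt_blowupSolution hgc hgpos hrange (hsub (uIcc_of_le ht.1 ▸ hs)))
    (intervalIntegrable_comp_of_monotoneOn hgm ht.1
      ((monotoneOn_blowupSolution hgc hgpos hrange).mono (hsub.trans Ico_subset_Iio_self))
      fun s hs => blowupSolution_nonneg hgc hgpos hrange (hsub hs))
  rw [picard, hftc, blowupSolution_zero hgc hgpos, sub_zero]

theorem eq_blowupSolution_of_eqOn_picard {u : ℝ → ℝ} {c : ℝ} (hgc : ContinuousOn g (Ici 0))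
    (hgpos : ∀ x ∈ Ici 0, 0 < g x) (hgm : MonotoneOn g (Ici 0))
    (hrange : range (timeMap (extendLeft g)) = Iio T) (hc : c ∈ Ico 0 T)
    (hu : MonotoneOn u (Icc 0 c)) (hfix : EqOn u (picard g u) (Icc 0 c)) :
    u c = blowupSolution g c := by
  have hu0 : ∀ s ∈ Icc 0 c, 0 ≤ u s := fun s hs =>
    (hfix ⟨le_rfl, hc.1⟩).trans integral_same ▸ hu ⟨le_rfl, hc.1⟩ hs hs.1
  have hcont : ContinuousOn u (Icc 0 c) :=
    (continuousOn_picard hgm hc.1 hu hu0).congr hfix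
  have hfix' : EqOn u (picard (extendLeft g) u) (Icc 0 c) := fun s hs =>
    (hfix hs).trans (picard_congr hs.1 fun r hr =>
      (extendLeft_of_nonneg (hu0 r ⟨hr.1, hr.2.trans hs.2⟩)).symm)
  refine (strictMono_timeMap_extendLeft hgc hgpos).injective ?_
  rw [timeMap_eq_of_eqOn_picard (continuous_extendLeft hgc) (extendLeft_pos hgpos) hc.1 hcont
    hfix', timeMap_blowupSolution hrange hc.2]

theorem tendsto_blowupSolution (hgc : ContinuousOn g (Ici 0)) (hgpos : ∀ x ∈ Ici 0, 0 < g x)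
    (hrange : range (timeMap (extendLeft g)) = Iio T) :
    Tendsto (blowupSolution g) (𝓝[<] T) atTop :=
  (strictMono_timeMap_extendLeft hgc hgpos).tendsto_invFun_nhdsLT hrange

end blowupSolution

noncomputable def picardIterate (g : ℝ → ℝ) : ℕ → ℝ → ℝ
  | 0 => fun _ => 0
  | n + 1 => picard g (picardIterate g n)

section picardIterate

variable {g : ℝ → ℝ}

theorem eq_picardIterate {u : ℕ → ℝ → ℝ} (hu0 : u 0 = fun _ => 0)
    (hu : ∀ n t, u (n + 1) t = picard g (u n) t) : u = picardIterate g := by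
  funext n
  induction n with
  | zero => exact hu0
  | succ n ih => exact funext fun t => (hu n t).trans (by rw [ih]; rfl)

theorem picardIterate_apply_zero (n : ℕ) : picardIterate g n 0 = 0 := by
  cases n with
  | zero => rfl
  | succ n => exact integral_same

theorem monotoneOn_picardIterate (hg0 : ∀ x ∈ Ici 0, 0 ≤ g x) (hgm : MonotoneOn g (Ici 0))
    (n : ℕ) : MonotoneOn (picardIterate g n) (Ici 0) := by
  induction n with
  | zero => exact monotoneOn_const
  | succ n ih =>
    exact monotoneOn_picard hg0 hgm ih fun s hs =>
      picardIterate_apply_zero n ▸ ih self_mem_Ici hs hs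

theorem picardIterate_nonneg (hg0 : ∀ x ∈ Ici 0, 0 ≤ g x) (hgm : MonotoneOn g (Ici 0))
    (n : ℕ) {t : ℝ} (ht : 0 ≤ t) : 0 ≤ picardIterate g n t :=
  picardIterate_apply_zero n ▸ monotoneOn_picardIterate hg0 hgm n self_mem_Ici ht ht

theorem picardIterate_le_succ (hg0 : ∀ x ∈ Ici 0, 0 ≤ g x) (hgm : MonotoneOn g (Ici 0))
    (n : ℕ) {t : ℝ} (ht : 0 ≤ t) : picardIterate g n t ≤ picardIterate g (n + 1) t := by
  induction n generalizing t with
  | zero => exact picardIterate_nonneg hg0 hgm 1 ht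
  | succ n ih =>
    exact picard_le_picard hgm ht
      ((monotoneOn_picardIterate hg0 hgm n).mono Icc_subset_Ici_self)
      ((monotoneOn_picardIterate hg0 hgm (n + 1)).mono Icc_subset_Ici_self)
      (fun s hs => picardIterate_nonneg hg0 hgm n hs.1) fun s hs => ih hs.1

theorem picardIterate_le_of_picard_le (hg0 : ∀ x ∈ Ici 0, 0 ≤ g x)
    (hgm : MonotoneOn g (Ici 0)) {w : ℝ → ℝ} {T : ℝ} (hw : MonotoneOn w (Ico 0 T))
    (hsup : ∀ t ∈ Ico 0 T, picard g w t ≤ w t) (n : ℕ) :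
    ∀ t ∈ Ico 0 T, picardIterate g n t ≤ w t := by
  induction n with
  | zero =>
    intro t ht
    have h0 : (0:ℝ) ∈ Ico 0 T := ⟨le_rfl, ht.1.trans_lt ht.2⟩
    exact (integral_same.symm.le.trans (hsup 0 h0)).trans (hw h0 ht ht.1)
  | succ n ih =>
    intro t ht
    have hsub : Icc 0 t ⊆ Ico 0 T := Icc_subset_Ico_right ht.2
    exact (picard_le_picard hgm ht.1
      ((monotoneOn_picardIterate hg0 hgm n).mono Icc_subset_Ici_self) (hw.mono hsub)
      (fun s hs => picardIterate_nonneg hg0 hgm n hs.1) fun s hs => ih s (hsub hs)).trans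
      (hsup t ht)

theorem tendsto_picardIterate_blowupSolution {T t : ℝ} (hgc : ContinuousOn g (Ici 0))
    (hgpos : ∀ x ∈ Ici 0, 0 < g x) (hgm : MonotoneOn g (Ici 0))
    (hrange : range (timeMap (extendLeft g)) = Iio T) (ht : t ∈ Ico 0 T) :
    Tendsto (fun n => picardIterate g n t) atTop (𝓝 (blowupSolution g t)) := by
  have hg0 : ∀ x ∈ Ici 0, 0 ≤ g x := fun x hx => (hgpos x hx).le
  have hmono := monotoneOn_picardIterate hg0 hgm
  have hbound : ∀ n, picardIterate g n t ≤ blowupSolution g t :=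
    fun n => picardIterate_le_of_picard_le hg0 hgm
      ((monotoneOn_blowupSolution hgc hgpos hrange).mono Ico_subset_Iio_self)
      (fun s hs => (eqOn_picard_blowupSolution hgc hgpos hgm hrange hs).symm.le) n t ht
  set L : ℝ → ℝ := fun s => ⨆ n, picardIterate g n s
  have hlim : ∀ s ∈ Icc 0 t, Tendsto (fun n => picardIterate g n s) atTop (𝓝 (L s)) :=
    fun s hs => tendsto_atTop_ciSup
      (monotone_nat_of_le_succ fun n => picardIterate_le_succ hg0 hgm n hs.1)
      ⟨blowupSolution g t, forall_mem_range.2 fun n =>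
        (hmono n hs.1 ht.1 hs.2).trans (hbound n)⟩
  have hLmono : MonotoneOn L (Icc 0 t) := fun a ha b hb hab =>
    le_of_tendsto_of_tendsto' (hlim a ha) (hlim b hb) fun n => hmono n ha.1 hb.1 hab
  have hLfix : EqOn L (picard g L) (Icc 0 t) := fun s hs =>
    tendsto_nhds_unique ((hlim s hs).comp (tendsto_add_atTop_nat 1)) <|
      tendsto_picard hgc hg0 hgm hs.1 (fun n => (hmono n).mono Icc_subset_Ici_self)
        (fun n r hr => picardIterate_nonneg hg0 hgm n hr.1)
        (fun n => (hmono n hs.1 ht.1 hs.2).trans (hbound n))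
        fun r hr => hlim r ⟨hr.1, hr.2.trans hs.2⟩
  exact eq_blowupSolution_of_eqOn_picard hgc hgpos hgm hrange ht hLmono hLfix ▸
    hlim t ⟨ht.1, le_rfl⟩

end picardIterate

/-- **Lemma 2** (Sidorov–Sidorov). If `g` is continuous, strictly positive and
monotone increasing on `[0,∞)` and `T⁺ = ∫₀^∞ dσ/g(σ)` is finite, then the Cauchy
problem `ω' = g(ω)`, `ω(0) = 0` has a monotone increasing solution `ω⁺` on `[0,T⁺)`,
the iterates `ω_n(t) = ∫₀ᵗ g(ω_{n-1}(s)) ds` converge to `ω⁺(t)` on `[0,T⁺)`, and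
`ω⁺(t) → ∞` as `t → T⁺` (blow-up at the finite time `T⁺`). -/
theorem stmt_2
    (g : ℝ → ℝ)
    (hgc : ContinuousOn g (Set.Ici 0))
    (hgpos : ∀ x ∈ Set.Ici (0:ℝ), 0 < g x)
    (hgm : MonotoneOn g (Set.Ici 0))
    (Tplus : ℝ)
    (hT : Filter.Tendsto (fun ω => ∫ σ in (0:ℝ)..ω, 1 / g σ)
      Filter.atTop (nhds Tplus))
    (ωseq : ℕ → ℝ → ℝ) (hω0 : ωseq 0 = fun _ => 0)
    (hωrec : ∀ n t, ωseq (n + 1) t = ∫ s in (0:ℝ)..t, g (ωseq n s)) :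
    ∃ ωp : ℝ → ℝ,
      MonotoneOn ωp (Set.Ico 0 Tplus) ∧
      (∀ t ∈ Set.Ico 0 Tplus, 0 ≤ ωp t) ∧
      ωp 0 = 0 ∧
      (∀ t ∈ Set.Ico 0 Tplus, HasDerivWithinAt ωp (g (ωp t)) (Set.Ico 0 Tplus) t) ∧
      (∀ t ∈ Set.Ico 0 Tplus,
        Filter.Tendsto (fun n => ωseq n t) Filter.atTop (nhds (ωp t))) ∧
      Filter.Tendsto ωp (nhdsWithin Tplus (Set.Iio Tplus)) Filter.atTop := by
  have hrange := range_timeMap_extendLeft hgc hgpos hT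
  obtain rfl : ωseq = picardIterate g := eq_picardIterate hω0 hωrec
  exact ⟨blowupSolution g,
    (monotoneOn_blowupSolution hgc hgpos hrange).mono Ico_subset_Iio_self,
    fun t ht => blowupSolution_nonneg hgc hgpos hrange ht,
    blowupSolution_zero hgc hgpos,
    fun t ht => (hasDerivAt_blowupSolution hgc hgpos hrange ht).hasDerivWithinAt,
    fun t ht => tendsto_picardIterate_blowupSolution hgc hgpos hgm hrange ht,
    tendsto_blowupSolution hgc hgpos hrange⟩
end

section
/- Suppose there exists a nonnegative continuous function z′ on [0,T) with z′(t) ≥ f(∫₀ᵗ γ(z′(s)) ds) for all t ∈ [0,T). Then the iterates z₀ = 0, z_n(t) = f(∫₀ᵗ γ(z_{n−1}(s)) ds) satisfy 0 = z₀(t) ≤ z₁(t) ≤ ⋯ ≤ z_n(t) ≤ z′(t) for every n and every t ∈ [0,T); they converge pointwise on [0,T) to a function z⁺; and z⁺ is continuous on [0,T) and satisfies z⁺(t) = f(∫₀ᵗ γ(z⁺(s)) ds) for all t ∈ [0,T). -/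
open Set Filter MeasureTheory intervalIntegral Topology

/-- (Sidorov–Sidorov). Under condition (C) (existence of an upper solution `z'`),
the majorant iterates `z₀ = 0`, `z_n(t) = f(∫₀ᵗ γ(z_{n-1}(s)) ds)` are monotone
increasing in `n`, bounded above by `z'`, converge pointwise on `[0,T)` to a
function `z⁺`, and `z⁺` is continuous and solves the majorant integral equation. -/
theorem stmt_7
    (T : ℝ) (hT : 0 < T)
    (f γ : ℝ → ℝ)
    (hfc : ContinuousOn f (Set.Ici 0)) (hγc : ContinuousOn γ (Set.Ici 0))
    (hfm : MonotoneOn f (Set.Ici 0)) (hγm : MonotoneOn γ (Set.Ici 0))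
    (hfnn : ∀ x ∈ Set.Ici (0:ℝ), 0 ≤ f x) (hγnn : ∀ x ∈ Set.Ici (0:ℝ), 0 ≤ γ x)
    -- condition (C): an upper solution `z'`
    (z' : ℝ → ℝ)
    (hz'c : ContinuousOn z' (Set.Ico 0 T))
    (hz'nn : ∀ t ∈ Set.Ico 0 T, 0 ≤ z' t)
    (hz'maj : ∀ t ∈ Set.Ico 0 T, f (∫ s in (0:ℝ)..t, γ (z' s)) ≤ z' t)
    -- the majorant iterates
    (zseq : ℕ → ℝ → ℝ) (hz0 : zseq 0 = fun _ => 0)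
    (hzrec : ∀ n t, zseq (n + 1) t = f (∫ s in (0:ℝ)..t, γ (zseq n s))) :
    (∀ t ∈ Set.Ico 0 T, ∀ n : ℕ,
      0 ≤ zseq n t ∧ zseq n t ≤ zseq (n + 1) t ∧ zseq n t ≤ z' t) ∧
    ∃ zplus : ℝ → ℝ,
      (∀ t ∈ Set.Ico 0 T,
        Filter.Tendsto (fun n => zseq n t) Filter.atTop (nhds (zplus t))) ∧
      ContinuousOn zplus (Set.Ico 0 T) ∧
      (∀ t ∈ Set.Ico 0 T, zplus t = f (∫ s in (0:ℝ)..t, γ (zplus s))) := by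
  -- Icc 0 t sits inside Ico 0 T when t ∈ Ico 0 T
  have hIcc : ∀ t ∈ Set.Ico (0:ℝ) T, Set.Icc (0:ℝ) t ⊆ Set.Ico 0 T := by
    intro t ht s hs
    exact ⟨hs.1, lt_of_le_of_lt hs.2 ht.2⟩
  -- continuity of γ ∘ w on Icc 0 t for continuous nonneg w
  have hcomp : ∀ (w : ℝ → ℝ), ContinuousOn w (Set.Ico 0 T) →
      (∀ u ∈ Set.Ico (0:ℝ) T, 0 ≤ w u) →
      ∀ t ∈ Set.Ico (0:ℝ) T, ContinuousOn (fun s => γ (w s)) (Set.Icc 0 t) := by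
    intro w hwc hwnn t ht
    exact hγc.comp (hwc.mono (hIcc t ht)) (fun s hs => hwnn s (hIcc t ht hs))
  have hII : ∀ (w : ℝ → ℝ), ContinuousOn w (Set.Ico 0 T) →
      (∀ u ∈ Set.Ico (0:ℝ) T, 0 ≤ w u) →
      ∀ t ∈ Set.Ico (0:ℝ) T, IntervalIntegrable (fun s => γ (w s)) volume 0 t := by
    intro w hwc hwnn t ht
    exact (hcomp w hwc hwnn t ht).intervalIntegrable_of_Icc ht.1
  -- nonnegativity of the integrals
  have hintnn : ∀ (w : ℝ → ℝ), (∀ u ∈ Set.Ico (0:ℝ) T, 0 ≤ w u) →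
      ∀ t ∈ Set.Ico (0:ℝ) T, 0 ≤ ∫ s in (0:ℝ)..t, γ (w s) := by
    intro w hwnn t ht
    refine intervalIntegral.integral_nonneg ht.1 (fun u hu => ?_)
    exact hγnn _ (hwnn u (hIcc t ht hu))
  -- the basic invariant: nonneg, ≤ z', continuous
  have key : ∀ n : ℕ, (∀ t ∈ Set.Ico (0:ℝ) T, 0 ≤ zseq n t ∧ zseq n t ≤ z' t) ∧
      ContinuousOn (zseq n) (Set.Ico 0 T) := by
    intro n
    induction n with
    | zero =>
        rw [hz0]
        exact ⟨fun t ht => ⟨le_refl 0, hz'nn t ht⟩, continuousOn_const⟩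
    | succ n ih =>
        obtain ⟨hb, hc⟩ := ih
        have hnn : ∀ u ∈ Set.Ico (0:ℝ) T, 0 ≤ zseq n u := fun u hu => (hb u hu).1
        constructor
        · intro t ht
          have h1 : 0 ≤ ∫ s in (0:ℝ)..t, γ (zseq n s) := hintnn _ hnn t ht
          have h2 : (∫ s in (0:ℝ)..t, γ (zseq n s)) ≤ ∫ s in (0:ℝ)..t, γ (z' s) := by
            refine intervalIntegral.integral_mono_on ht.1 (hII _ hc hnn t ht)
              (hII _ hz'c hz'nn t ht) (fun u hu => ?_)
            have hu' := hIcc t ht hu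
            exact hγm (hnn u hu') (hz'nn u hu') (hb u hu').2
          have h3 : 0 ≤ ∫ s in (0:ℝ)..t, γ (z' s) := hintnn _ hz'nn t ht
          refine ⟨?_, ?_⟩
          · rw [hzrec]; exact hfnn _ h1
          · rw [hzrec]
            exact le_trans (hfm h1 h3 h2) (hz'maj t ht)
        · have hprim : ContinuousOn (fun t => ∫ s in (0:ℝ)..t, γ (zseq n s))
              (Set.Ico 0 T) := by
            intro t₀ ht₀
            obtain ⟨b, hb1, hb2⟩ := exists_between ht₀.2
            have hb0 : (0:ℝ) ≤ b := le_trans ht₀.1 hb1.le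
            have hbI : b ∈ Set.Ico (0:ℝ) T := ⟨hb0, hb2⟩
            have hint : IntegrableOn (fun s => γ (zseq n s)) (Set.uIcc 0 b) volume := by
              rw [Set.uIcc_of_le hb0]
              exact (hcomp _ hc hnn b hbI).integrableOn_Icc
            have hP := intervalIntegral.continuousOn_primitive_interval hint
            rw [Set.uIcc_of_le hb0] at hP
            refine (hP t₀ ⟨ht₀.1, hb1.le⟩).mono_of_mem_nhdsWithin ?_
            exact mem_nhdsWithin.2 ⟨Set.Iio b, isOpen_Iio, hb1,
              fun x hx => ⟨hx.2.1, hx.1.le⟩⟩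
          have : ContinuousOn (fun t => f (∫ s in (0:ℝ)..t, γ (zseq n s)))
              (Set.Ico 0 T) :=
            hfc.comp hprim (fun t ht => hintnn _ hnn t ht)
          exact this.congr (fun t _ => hzrec n t)
  -- monotone in n
  have hmono : ∀ n : ℕ, ∀ t ∈ Set.Ico (0:ℝ) T, zseq n t ≤ zseq (n + 1) t := by
    intro n
    induction n with
    | zero =>
        intro t ht
        rw [hz0]
        exact ((key 1).1 t ht).1
    | succ n ih =>
        intro t ht
        rw [hzrec n t, hzrec (n + 1) t]
        have hnn : ∀ u ∈ Set.Ico (0:ℝ) T, 0 ≤ zseq n u := fun u hu => ((key n).1 u hu).1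
        have hnn' : ∀ u ∈ Set.Ico (0:ℝ) T, 0 ≤ zseq (n + 1) u :=
          fun u hu => ((key (n + 1)).1 u hu).1
        have h1 : 0 ≤ ∫ s in (0:ℝ)..t, γ (zseq n s) := hintnn _ hnn t ht
        have h2 : 0 ≤ ∫ s in (0:ℝ)..t, γ (zseq (n + 1) s) := hintnn _ hnn' t ht
        refine hfm h1 h2 ?_
        refine intervalIntegral.integral_mono_on ht.1 (hII _ (key n).2 hnn t ht)
          (hII _ (key (n + 1)).2 hnn' t ht) (fun u hu => ?_)
        have hu' := hIcc t ht hu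
        exact hγm (hnn u hu') (hnn' u hu') (ih u hu')
  have hmonoSeq : ∀ t ∈ Set.Ico (0:ℝ) T, Monotone (fun n => zseq n t) :=
    fun t ht => monotone_nat_of_le_succ (fun n => hmono n t ht)
  have hbdd : ∀ t ∈ Set.Ico (0:ℝ) T, BddAbove (Set.range fun n => zseq n t) := by
    intro t ht
    exact ⟨z' t, Set.forall_mem_range.2 (fun n => ((key n).1 t ht).2)⟩
  set zplus : ℝ → ℝ := fun t => ⨆ n, zseq n t with hzplus
  have htend : ∀ t ∈ Set.Ico (0:ℝ) T,
      Tendsto (fun n => zseq n t) atTop (𝓝 (zplus t)) :=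
    fun t ht => tendsto_atTop_ciSup (hmonoSeq t ht) (hbdd t ht)
  have hznn : ∀ t ∈ Set.Ico (0:ℝ) T, 0 ≤ zplus t := by
    intro t ht
    have := le_ciSup (hbdd t ht) 0
    calc (0:ℝ) = zseq 0 t := by rw [hz0]
      _ ≤ zplus t := this
  -- pointwise convergence of γ ∘ zseq n to γ ∘ zplus on [0,T)
  have hγtend : ∀ s ∈ Set.Ico (0:ℝ) T,
      Tendsto (fun n => γ (zseq n s)) atTop (𝓝 (γ (zplus s))) := by
    intro s hs
    have hcw : ContinuousWithinAt γ (Set.Ici 0) (zplus s) := hγc (zplus s) (hznn s hs)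
    refine hcw.tendsto.comp ?_
    refine tendsto_nhdsWithin_of_tendsto_nhds_of_eventually_within _ (htend s hs) ?_
    exact Eventually.of_forall (fun n => ((key n).1 s hs).1)
  -- convergence of the integrals (dominated convergence)
  have hlimInt : ∀ t ∈ Set.Ico (0:ℝ) T,
      Tendsto (fun n => ∫ s in (0:ℝ)..t, γ (zseq n s)) atTop
        (𝓝 (∫ s in (0:ℝ)..t, γ (zplus s))) := by
    intro t ht
    have huIoc : Set.uIoc (0:ℝ) t = Set.Ioc 0 t := Set.uIoc_of_le ht.1
    refine intervalIntegral.tendsto_integral_filter_of_dominated_convergence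
      (fun s => γ (z' s)) ?_ ?_ (hII _ hz'c hz'nn t ht) ?_
    · refine Eventually.of_forall (fun n => ?_)
      rw [huIoc]
      exact ((hcomp _ (key n).2 (fun u hu => ((key n).1 u hu).1) t ht).mono
        Set.Ioc_subset_Icc_self).aestronglyMeasurable measurableSet_Ioc
    · refine Eventually.of_forall (fun n => ae_of_all _ (fun s hs => ?_))
      rw [huIoc] at hs
      have hs' : s ∈ Set.Icc (0:ℝ) t := Set.Ioc_subset_Icc_self hs
      have hs'' := hIcc t ht hs'
      have h1 : 0 ≤ zseq n s := ((key n).1 s hs'').1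
      rw [Real.norm_eq_abs, abs_of_nonneg (hγnn _ h1)]
      exact hγm h1 (hz'nn s hs'') (((key n).1 s hs'').2)
    · refine ae_of_all _ (fun s hs => ?_)
      rw [huIoc] at hs
      exact hγtend s (hIcc t ht (Set.Ioc_subset_Icc_self hs))
  -- the limit equation
  have heq : ∀ t ∈ Set.Ico (0:ℝ) T, zplus t = f (∫ s in (0:ℝ)..t, γ (zplus s)) := by
    intro t ht
    have h1 : Tendsto (fun n => zseq (n + 1) t) atTop (𝓝 (zplus t)) :=
      (htend t ht).comp (tendsto_add_atTop_nat 1)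
    have hInn : 0 ≤ ∫ s in (0:ℝ)..t, γ (zplus s) := by
      refine intervalIntegral.integral_nonneg ht.1 (fun u hu => ?_)
      exact hγnn _ (hznn u (hIcc t ht hu))
    have h2 : Tendsto (fun n => zseq (n + 1) t) atTop
        (𝓝 (f (∫ s in (0:ℝ)..t, γ (zplus s)))) := by
      simp only [hzrec]
      refine (hfc _ hInn).tendsto.comp ?_
      refine tendsto_nhdsWithin_of_tendsto_nhds_of_eventually_within _ (hlimInt t ht) ?_
      exact Eventually.of_forall
        (fun n => hintnn _ (fun u hu => ((key n).1 u hu).1) t ht)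
    exact tendsto_nhds_unique h1 h2
  -- continuity of zplus
  have hcontz : ContinuousOn zplus (Set.Ico 0 T) := by
    have hprim : ContinuousOn (fun t => ∫ s in (0:ℝ)..t, γ (zplus s))
        (Set.Ico 0 T) := by
      intro t₀ ht₀
      obtain ⟨b, hb1, hb2⟩ := exists_between ht₀.2
      have hb0 : (0:ℝ) ≤ b := le_trans ht₀.1 hb1.le
      have hbI : b ∈ Set.Ico (0:ℝ) T := ⟨hb0, hb2⟩
      have hmeas : AEStronglyMeasurable (fun s => γ (zplus s))
          (volume.restrict (Set.Icc (0:ℝ) b)) := by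
        refine aestronglyMeasurable_of_tendsto_ae atTop
          (fun n => ((hcomp _ (key n).2 (fun u hu => ((key n).1 u hu).1) b hbI)
            ).aestronglyMeasurable measurableSet_Icc) ?_
        refine (ae_restrict_iff' measurableSet_Icc).2 (ae_of_all _ (fun s hs => ?_))
        exact hγtend s (hIcc b hbI hs)
      have hint : IntegrableOn (fun s => γ (zplus s)) (Set.Icc 0 b) volume := by
        refine Integrable.mono' ((hcomp _ hz'c hz'nn b hbI).integrableOn_Icc) hmeas ?_
        refine (ae_restrict_iff' measurableSet_Icc).2 (ae_of_all _ (fun s hs => ?_))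
        have hs' := hIcc b hbI hs
        rw [Real.norm_eq_abs, abs_of_nonneg (hγnn _ (hznn s hs'))]
        refine hγm (hznn s hs') (hz'nn s hs') ?_
        exact ciSup_le (fun n => ((key n).1 s hs').2)
      have hP := intervalIntegral.continuousOn_primitive_interval
        (by rw [Set.uIcc_of_le hb0]; exact hint)
      rw [Set.uIcc_of_le hb0] at hP
      refine (hP t₀ ⟨ht₀.1, hb1.le⟩).mono_of_mem_nhdsWithin ?_
      exact mem_nhdsWithin.2 ⟨Set.Iio b, isOpen_Iio, hb1, fun x hx => ⟨hx.2.1, hx.1.le⟩⟩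
    have hF : ContinuousOn (fun t => f (∫ s in (0:ℝ)..t, γ (zplus s)))
        (Set.Ico 0 T) := by
      refine hfc.comp hprim (fun t ht => ?_)
      refine intervalIntegral.integral_nonneg ht.1 (fun u hu => ?_)
      exact hγnn _ (hznn u (hIcc t ht hu))
    exact hF.congr heq
  refine ⟨fun t ht n => ⟨((key n).1 t ht).1, hmono n t ht, ((key n).1 t ht).2⟩,
    zplus, htend, hcontz, heq⟩
end

section
/- Let g = γ∘f be continuous, strictly positive and monotone increasing on [0,∞), with T⁺ = ∫₀^∞ dσ/g(σ) finite, and let ω⁺ : [0,T⁺) → [0,∞) be the solution of ω′ = g(ω), ω(0) = 0. Then the function z⁺(t) = f(ω⁺(t)) is a nonnegative continuous solution of the majorant integral equation z(t) = f(∫₀ᵗ γ(z(s)) ds) on [0,T⁺), and the iterates z₀ = 0, z_n(t) = f(∫₀ᵗ γ(z_{n−1}(s)) ds) converge to z⁺(t) for every t ∈ [0,T⁺). -/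
open Set MeasureTheory Filter intervalIntegral Topology


/-- **Remark 2** (Sidorov–Sidorov). If `g = γ∘f` is continuous, strictly positive
and monotone increasing with `T⁺ = ∫₀^∞ dσ/g(σ)` finite, and `ω⁺` solves
`ω' = γ(f(ω))`, `ω(0) = 0` on `[0,T⁺)`, then `z⁺(t) = f(ω⁺(t))` is a nonnegative
continuous solution of the majorant integral equation `z(t) = f(∫₀ᵗ γ(z(s)) ds)`
on `[0,T⁺)`, and the iterates `z_n` converge to `z⁺` pointwise on `[0,T⁺)`. -/
theorem stmt_9
    (f γ : ℝ → ℝ)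
    (hfc : ContinuousOn f (Set.Ici 0)) (hγc : ContinuousOn γ (Set.Ici 0))
    (hfm : MonotoneOn f (Set.Ici 0)) (hγm : MonotoneOn γ (Set.Ici 0))
    (hfnn : ∀ x ∈ Set.Ici (0:ℝ), 0 ≤ f x) (hγnn : ∀ x ∈ Set.Ici (0:ℝ), 0 ≤ γ x)
    -- `g = γ ∘ f` is strictly positive and monotone increasing
    (hgpos : ∀ x ∈ Set.Ici (0:ℝ), 0 < γ (f x))
    (hgm : MonotoneOn (fun x => γ (f x)) (Set.Ici 0))
    (Tplus : ℝ)
    (hT : Filter.Tendsto (fun ω => ∫ σ in (0:ℝ)..ω, 1 / γ (f σ))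
      Filter.atTop (nhds Tplus))
    -- `ω⁺` is the solution of the Cauchy problem `ω' = γ(f(ω))`, `ω(0)=0` on `[0,T⁺)`
    (ωp : ℝ → ℝ)
    (hωc : ContinuousOn ωp (Set.Ico 0 Tplus))
    (hωnn : ∀ t ∈ Set.Ico 0 Tplus, 0 ≤ ωp t)
    (hω0 : ωp 0 = 0)
    (hωd : ∀ t ∈ Set.Ico 0 Tplus,
      HasDerivWithinAt ωp (γ (f (ωp t))) (Set.Ico 0 Tplus) t)
    -- the majorant iterates
    (zseq : ℕ → ℝ → ℝ) (hz0 : zseq 0 = fun _ => 0)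
    (hzrec : ∀ n t, zseq (n + 1) t = f (∫ s in (0:ℝ)..t, γ (zseq n s))) :
    (∀ t ∈ Set.Ico 0 Tplus, 0 ≤ f (ωp t)) ∧
    ContinuousOn (fun t => f (ωp t)) (Set.Ico 0 Tplus) ∧
    (∀ t ∈ Set.Ico 0 Tplus,
      f (ωp t) = f (∫ s in (0:ℝ)..t, γ (f (ωp s)))) ∧
    (∀ t ∈ Set.Ico 0 Tplus,
      Filter.Tendsto (fun n => zseq n t) Filter.atTop (nhds (f (ωp t)))) := by
  set I := Set.Ico (0:ℝ) Tplus with hIdef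
  -- basic subset facts
  have hIcc_sub : ∀ {t : ℝ}, t ∈ I → Icc (0:ℝ) t ⊆ I := by
    rintro t ⟨ht0, htT⟩ x hx; exact ⟨hx.1, lt_of_le_of_lt hx.2 htT⟩
  have hI_Ici : I ⊆ Ici (0:ℝ) := fun x hx => hx.1
  -- g = γ ∘ f continuous on Ici 0
  have hgc : ContinuousOn (fun x => γ (f x)) (Ici 0) :=
    hγc.comp hfc (fun x hx => hfnn x hx)
  have hgωc : ContinuousOn (fun s => γ (f (ωp s))) I :=
    hgc.comp hωc (fun t ht => hωnn t ht)
  have hgω_int : ∀ t ∈ I, IntervalIntegrable (fun s => γ (f (ωp s))) volume 0 t := by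
    intro t ht
    apply ContinuousOn.intervalIntegrable
    rw [Set.uIcc_of_le ht.1]
    exact hgωc.mono (hIcc_sub ht)
  -- ω satisfies the integral equation
  have hωint : ∀ t ∈ I, ωp t = ∫ s in (0:ℝ)..t, γ (f (ωp s)) := by
    intro t ht
    rcases eq_or_lt_of_le ht.1 with h | h
    · rw [← h, intervalIntegral.integral_same, hω0]
    · have key := intervalIntegral.integral_eq_sub_of_hasDeriv_right_of_le ht.1
        (hωc.mono (hIcc_sub ht))
        (fun x hx => ((hωd x (hIcc_sub ht ⟨hx.1.le, hx.2.le⟩)).hasDerivAt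
          (Ico_mem_nhds hx.1 (lt_trans hx.2 ht.2))).hasDerivWithinAt)
        (hgω_int t ht)
      rw [key, hω0, sub_zero]
  -- continuity of primitives on I
  have hprim : ∀ h : ℝ → ℝ, (∀ b ∈ I, IntervalIntegrable h volume 0 b) →
      ContinuousOn (fun t => ∫ s in (0:ℝ)..t, h s) I := by
    intro h hint t ht
    obtain ⟨t', htt', ht'T⟩ := exists_between ht.2
    have h0t' : (0:ℝ) ≤ t' := le_trans ht.1 htt'.le
    have hc : ContinuousOn (fun t => ∫ s in (0:ℝ)..t, h s) (Set.uIcc 0 t') :=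
      intervalIntegral.continuousOn_primitive_interval' (hint t' ⟨h0t', ht'T⟩)
        Set.left_mem_uIcc
    refine (hc.continuousWithinAt ?_).mono_of_mem_nhdsWithin ?_
    · rw [Set.uIcc_of_le h0t']; exact ⟨ht.1, htt'.le⟩
    · refine Filter.mem_of_superset (inter_mem_nhdsWithin I (Iio_mem_nhds htt')) ?_
      rw [Set.uIcc_of_le h0t']
      exact fun x hx => ⟨hx.1.1, le_of_lt hx.2⟩
  -- main induction on the iterates
  have hmain : ∀ n, ContinuousOn (zseq n) I ∧ (∀ t ∈ I, 0 ≤ zseq n t) ∧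
      (∀ t ∈ I, zseq n t ≤ f (ωp t)) ∧ (∀ t ∈ I, zseq n t ≤ zseq (n+1) t) := by
    have step_cont : ∀ w : ℝ → ℝ, ContinuousOn w I → (∀ t ∈ I, 0 ≤ w t) →
        ContinuousOn (fun s => γ (w s)) I := fun w hw hw0 => hγc.comp hw hw0
    have step_int : ∀ w : ℝ → ℝ, ContinuousOn w I → (∀ t ∈ I, 0 ≤ w t) → ∀ t ∈ I,
        IntervalIntegrable (fun s => γ (w s)) volume 0 t := by
      intro w hw hw0 t ht
      apply ContinuousOn.intervalIntegrable
      rw [Set.uIcc_of_le ht.1]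
      exact (step_cont w hw hw0).mono (hIcc_sub ht)
    intro n
    induction n with
    | zero =>
      refine ⟨by rw [hz0]; exact continuousOn_const, fun t ht => by rw [hz0], ?_, ?_⟩
      · intro t ht; rw [hz0]; exact hfnn _ (hωnn t ht)
      · intro t ht
        rw [hz0, hzrec]
        apply hfnn
        apply intervalIntegral.integral_nonneg ht.1
        intro u hu
        rw [hz0]
        exact hγnn 0 Set.self_mem_Ici
    | succ n ih =>
      obtain ⟨ihc, ihnn, ihle, ihmono⟩ := ih
      have hcontn1 : ContinuousOn (zseq (n+1)) I := by
        have : ContinuousOn (fun t => ∫ s in (0:ℝ)..t, γ (zseq n s)) I := by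
          apply hprim
          intro b hb
          exact step_int _ ihc ihnn b hb
        have hnn : ∀ t ∈ I, 0 ≤ ∫ s in (0:ℝ)..t, γ (zseq n s) := by
          intro t ht
          exact intervalIntegral.integral_nonneg ht.1
            (fun u hu => hγnn _ (ihnn u (hIcc_sub ht hu)))
        have := hfc.comp this hnn
        exact this.congr (fun t ht => (hzrec n t))
      have hnn1 : ∀ t ∈ I, 0 ≤ zseq (n+1) t := by
        intro t ht
        rw [hzrec]
        exact hfnn _ (intervalIntegral.integral_nonneg ht.1
          (fun u hu => hγnn _ (ihnn u (hIcc_sub ht hu))))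
      have hintle : ∀ t ∈ I, (∫ s in (0:ℝ)..t, γ (zseq n s)) ≤
          ∫ s in (0:ℝ)..t, γ (f (ωp s)) := by
        intro t ht
        apply intervalIntegral.integral_mono_on ht.1
          (step_int _ ihc ihnn t ht) (hgω_int t ht)
        intro u hu
        exact hγm (ihnn u (hIcc_sub ht hu)) (hfnn _ (hωnn u (hIcc_sub ht hu)))
          (ihle u (hIcc_sub ht hu))
      refine ⟨hcontn1, hnn1, ?_, ?_⟩
      · intro t ht
        rw [hzrec, hωint t ht]
        apply hfm _ _ (hintle t ht)
        · exact intervalIntegral.integral_nonneg ht.1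
            (fun u hu => hγnn _ (ihnn u (hIcc_sub ht hu)))
        · rw [← hωint t ht]; exact hωnn t ht
      · intro t ht
        rw [hzrec, hzrec]
        apply hfm _ _ ?_
        · exact intervalIntegral.integral_nonneg ht.1
            (fun u hu => hγnn _ (ihnn u (hIcc_sub ht hu)))
        · exact intervalIntegral.integral_nonneg ht.1
            (fun u hu => hγnn _ (hnn1 u (hIcc_sub ht hu)))
        · apply intervalIntegral.integral_mono_on ht.1
            (step_int _ ihc ihnn t ht) (step_int _ hcontn1 hnn1 t ht)
          intro u hu
          exact hγm (ihnn u (hIcc_sub ht hu)) (hnn1 u (hIcc_sub ht hu))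
            (ihmono u (hIcc_sub ht hu))
  have huIoc_sub : ∀ {t : ℝ}, t ∈ I → Set.uIoc 0 t ⊆ I := by
    intro t ht
    rw [Set.uIoc_of_le ht.1]
    exact fun x hx => hIcc_sub ht ⟨hx.1.le, hx.2⟩
  -- the limit function
  set L : ℝ → ℝ := fun s => ⨆ n, zseq n s with hLdef
  have hbdd : ∀ t ∈ I, BddAbove (Set.range fun n => zseq n t) := by
    intro t ht
    exact ⟨f (ωp t), by rintro x ⟨n, rfl⟩; exact (hmain n).2.2.1 t ht⟩
  have hLt : ∀ t ∈ I, Tendsto (fun n => zseq n t) atTop (𝓝 (L t)) := fun t ht =>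
    tendsto_atTop_ciSup (monotone_nat_of_le_succ (fun n => (hmain n).2.2.2 t ht)) (hbdd t ht)
  have hLnn : ∀ t ∈ I, 0 ≤ L t := by
    intro t ht
    have h := le_ciSup (hbdd t ht) 0
    rw [hz0] at h
    exact h
  have hLle : ∀ t ∈ I, L t ≤ f (ωp t) := fun t ht =>
    ciSup_le fun n => (hmain n).2.2.1 t ht
  have hγtend : ∀ s ∈ I, Tendsto (fun n => γ (zseq n s)) atTop (𝓝 (γ (L s))) := by
    intro s hs
    have h1 : Tendsto (fun n => zseq n s) atTop (𝓝[Set.Ici 0] (L s)) := by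
      rw [tendsto_nhdsWithin_iff]
      exact ⟨hLt s hs, Filter.Eventually.of_forall fun n => (hmain n).2.1 s hs⟩
    exact ((hγc (L s) (hLnn s hs)).tendsto).comp h1
  have hDCT : ∀ t ∈ I, Tendsto (fun n => ∫ s in (0:ℝ)..t, γ (zseq n s)) atTop
      (𝓝 (∫ s in (0:ℝ)..t, γ (L s))) := by
    intro t ht
    apply intervalIntegral.tendsto_integral_filter_of_dominated_convergence
      (fun s => γ (f (ωp s)))
    · exact Filter.Eventually.of_forall fun n =>
        ((hγc.comp (hmain n).1 (hmain n).2.1).mono (huIoc_sub ht)).aestronglyMeasurable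
          measurableSet_uIoc
    · refine Filter.Eventually.of_forall fun n => Filter.Eventually.of_forall fun s hs => ?_
      rw [Real.norm_eq_abs, abs_of_nonneg (hγnn _ ((hmain n).2.1 s (huIoc_sub ht hs)))]
      exact hγm ((hmain n).2.1 s (huIoc_sub ht hs)) (hfnn _ (hωnn s (huIoc_sub ht hs)))
        ((hmain n).2.2.1 s (huIoc_sub ht hs))
    · exact hgω_int t ht
    · exact Filter.Eventually.of_forall fun s hs => hγtend s (huIoc_sub ht hs)
  set u : ℝ → ℝ := fun t => ∫ s in (0:ℝ)..t, γ (L s) with hudef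
  have hu_nn : ∀ t ∈ I, 0 ≤ u t := fun t ht =>
    intervalIntegral.integral_nonneg ht.1 fun s hs => hγnn _ (hLnn s (hIcc_sub ht hs))
  have hLfu : ∀ t ∈ I, L t = f (u t) := by
    intro t ht
    have h1 : Tendsto (fun n => zseq (n+1) t) atTop (𝓝 (L t)) :=
      (hLt t ht).comp (Filter.tendsto_add_atTop_nat 1)
    have h2 : Tendsto (fun n => zseq (n+1) t) atTop (𝓝 (f (u t))) := by
      have hin : Tendsto (fun n => ∫ s in (0:ℝ)..t, γ (zseq n s)) atTop
          (𝓝[Set.Ici 0] (u t)) := by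
        rw [tendsto_nhdsWithin_iff]
        refine ⟨hDCT t ht, Filter.Eventually.of_forall fun n => ?_⟩
        exact intervalIntegral.integral_nonneg ht.1
          fun s hs => hγnn _ ((hmain n).2.1 s (hIcc_sub ht hs))
      have h3 := ((hfc (u t) (hu_nn t ht)).tendsto).comp hin
      exact h3.congr fun n => (hzrec n t).symm
    exact tendsto_nhds_unique h1 h2
  have hγL_int : ∀ t ∈ I, IntervalIntegrable (fun s => γ (L s)) volume 0 t := by
    intro t ht
    have hmeas : AEStronglyMeasurable (fun s => γ (L s))
        (volume.restrict (Set.uIoc 0 t)) := by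
      apply aestronglyMeasurable_of_tendsto_ae atTop (fun n =>
        ((hγc.comp (hmain n).1 (hmain n).2.1).mono (huIoc_sub ht)).aestronglyMeasurable
          measurableSet_uIoc)
      filter_upwards [MeasureTheory.ae_restrict_mem measurableSet_uIoc] with s hs
      exact hγtend s (huIoc_sub ht hs)
    refine (hgω_int t ht).mono_fun' hmeas ?_
    filter_upwards [MeasureTheory.ae_restrict_mem measurableSet_uIoc] with s hs
    have hsI : s ∈ I := huIoc_sub ht hs
    rw [Real.norm_eq_abs, abs_of_nonneg (hγnn _ (hLnn s hsI))]
    exact hγm (hLnn s hsI) (hfnn _ (hωnn s hsI)) (hLle s hsI)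
  have hu_cont : ContinuousOn u I := hprim _ hγL_int
  have hu_eq : ∀ t ∈ I, u t = ∫ s in (0:ℝ)..t, γ (f (u s)) := by
    intro t ht
    show (∫ s in (0:ℝ)..t, γ (L s)) = _
    apply intervalIntegral.integral_congr
    intro s hs
    rw [Set.uIcc_of_le ht.1] at hs
    simp only [hLfu s (hIcc_sub ht hs)]
  -- the separation function Gc
  set Gc : ℝ → ℝ := fun y => ∫ σ in (0:ℝ)..y, 1 / γ (f σ) with hGdef
  have hinv_cont : ContinuousOn (fun σ => 1 / γ (f σ)) (Ici 0) := by
    apply ContinuousOn.div continuousOn_const hgc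
    exact fun x hx => (hgpos x hx).ne'
  have hinv_int : ∀ {a b : ℝ}, 0 ≤ a → a ≤ b →
      IntervalIntegrable (fun σ => 1 / γ (f σ)) volume a b := by
    intro a b ha hab
    apply ContinuousOn.intervalIntegrable
    rw [Set.uIcc_of_le hab]
    exact hinv_cont.mono (fun x hx => le_trans ha hx.1)
  have hGc_cont : ContinuousOn Gc (Ici 0) := by
    intro y hy
    have hy' : (0:ℝ) ≤ y := hy
    have h1 : ContinuousOn Gc (Set.uIcc 0 (y+1)) :=
      intervalIntegral.continuousOn_primitive_interval'
        (hinv_int (a := 0) (b := y + 1) le_rfl (by linarith)) Set.left_mem_uIcc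
    refine (h1.continuousWithinAt ?_).mono_of_mem_nhdsWithin ?_
    · rw [Set.uIcc_of_le (by linarith)]; exact ⟨hy', by linarith⟩
    · refine Filter.mem_of_superset
        (inter_mem_nhdsWithin (Ici 0) (Iio_mem_nhds (show y < y + 1 by linarith))) ?_
      rw [Set.uIcc_of_le (by linarith)]
      exact fun x hx => ⟨hx.1, hx.2.le⟩
  have hG0 : Gc 0 = 0 := intervalIntegral.integral_same
  have hGmono : StrictMonoOn Gc (Ici 0) := by
    intro a ha b hb hab
    have ha' : (0:ℝ) ≤ a := ha
    have h1 : Gc a + ∫ σ in a..b, 1 / γ (f σ) = Gc b :=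
      intervalIntegral.integral_add_adjacent_intervals (hinv_int le_rfl ha')
        (hinv_int ha' hab.le)
    have h2 : 0 < ∫ σ in a..b, 1 / γ (f σ) := by
      apply intervalIntegral.intervalIntegral_pos_of_pos_on (hinv_int ha' hab.le) _ hab
      intro x hx
      exact div_pos one_pos (hgpos x (le_trans ha' hx.1.le))
    linarith
  -- Gc ∘ v = id for any solution v of the integral equation
  have hGid : ∀ v : ℝ → ℝ, ContinuousOn v I → (∀ s ∈ I, 0 ≤ v s) →
      (∀ s ∈ I, v s = ∫ r in (0:ℝ)..s, γ (f (v r))) → ∀ t ∈ I, Gc (v t) = t := by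
    intro v hvc hvnn hveq t ht
    have hv0 : v 0 = 0 := by
      rw [hveq 0 ⟨le_rfl, lt_of_le_of_lt ht.1 ht.2⟩, intervalIntegral.integral_same]
    rcases eq_or_lt_of_le ht.1 with h | h
    · rw [← h, hv0, hG0]
    · have hgvc : ContinuousOn (fun s => γ (f (v s))) I := hgc.comp hvc hvnn
      have hgv_int : ∀ s ∈ I, IntervalIntegrable (fun r => γ (f (v r))) volume 0 s := by
        intro s hs
        apply ContinuousOn.intervalIntegrable
        rw [Set.uIcc_of_le hs.1]
        exact hgvc.mono (hIcc_sub hs)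
      have hvpos : ∀ x ∈ Ioo (0:ℝ) t, 0 < v x := by
        intro x hx
        have hxI : x ∈ I := hIcc_sub ht ⟨hx.1.le, hx.2.le⟩
        rw [hveq x hxI]
        apply intervalIntegral.intervalIntegral_pos_of_pos_on (hgv_int x hxI) _ hx.1
        intro r hr
        exact hgpos _ (hvnn r (hIcc_sub hxI ⟨hr.1.le, hr.2.le⟩))
      have key := intervalIntegral.integral_eq_sub_of_hasDeriv_right_of_le
        (f := fun s => Gc (v s)) (f' := fun _ => (1:ℝ)) ht.1
        (hGc_cont.comp (hvc.mono (hIcc_sub ht)) (fun s hs => hvnn s (hIcc_sub ht hs)))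
        ?_ intervalIntegrable_const
      · simp only [integral_one, hv0, hG0, sub_zero] at key
        linarith
      · intro x hx
        have hxI : x ∈ I := hIcc_sub ht ⟨hx.1.le, hx.2.le⟩
        have hxT : x < Tplus := lt_trans hx.2 ht.2
        have hF : HasDerivAt (fun r => ∫ s in (0:ℝ)..r, γ (f (v s)))
            (γ (f (v x))) x := by
          apply intervalIntegral.integral_hasDerivAt_right (hgv_int x hxI)
          · exact ⟨Ioo 0 Tplus, Ioo_mem_nhds hx.1 hxT,
              (hgvc.mono Ioo_subset_Ico_self).aestronglyMeasurable measurableSet_Ioo⟩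
          · exact (hgvc.mono Ioo_subset_Ico_self).continuousAt (Ioo_mem_nhds hx.1 hxT)
        have hvd : HasDerivAt v (γ (f (v x))) x := by
          apply hF.congr_of_eventuallyEq
          filter_upwards [Ioo_mem_nhds hx.1 hxT] with y hy
          exact hveq y ⟨hy.1.le, hy.2⟩
        have hGd : HasDerivAt Gc (1 / γ (f (v x))) (v x) := by
          apply intervalIntegral.integral_hasDerivAt_right
            (hinv_int le_rfl (hvnn x hxI))
          · exact ⟨Ici 0, Ici_mem_nhds (hvpos x hx),
              hinv_cont.aestronglyMeasurable measurableSet_Ici⟩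
          · exact hinv_cont.continuousAt (Ici_mem_nhds (hvpos x hx))
        have hcomp := hGd.comp x hvd
        have heq : 1 / γ (f (v x)) * γ (f (v x)) = 1 :=
          one_div_mul_cancel (hgpos _ (hvnn x hxI)).ne'
        rw [heq] at hcomp
        exact hcomp.hasDerivWithinAt
  have hGω : ∀ t ∈ I, Gc (ωp t) = t := hGid ωp hωc hωnn hωint
  have hGu : ∀ t ∈ I, Gc (u t) = t := hGid u hu_cont hu_nn hu_eq
  have huω : ∀ t ∈ I, u t = ωp t := fun t ht =>
    hGmono.injOn (hu_nn t ht) (hωnn t ht) ((hGu t ht).trans (hGω t ht).symm)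
  refine ⟨fun t ht => hfnn _ (hωnn t ht), hfc.comp hωc (fun t ht => hωnn t ht),
    fun t ht => by rw [← hωint t ht], ?_⟩
  intro t ht
  have hfin : f (ωp t) = L t := by rw [hLfu t ht, huω t ht]
  rw [hfin]
  exact hLt t ht
end

section
/- Suppose F(0,t) satisfies f(0,0) = 0, i.e. the zero function yields F-value zero at t = 0, and suppose: (A′) ‖F(u,t) − A(u(t))‖ ≤ f(r,t) whenever ‖u(s)‖ ≤ r for all s ∈ [0,t]; (E′) ‖F_u(u,t) − A∘ev_t‖ ≤ f_r′(r,t) (operator norm) whenever ‖u(s)‖ ≤ r for all s ∈ [0,t]; (G) f(r,t) and its partial derivative f_r′(r,t) are nonnegative and monotone increasing in (r,t), positive for r > 0, t > 0, f(0,0) = 0, ‖A⁻¹‖·f_r′(0,0) < 1, and r ↦ f(r,t) is convex for each t. If the pair (r⁺, T⁺) with r⁺ > 0, T⁺ > 0 satisfies the algebraic majorant system r⁺ = ‖A⁻¹‖ f(r⁺,T⁺) and 1 = ‖A⁻¹‖ f_r′(r⁺,T⁺), then the equation F(u,t) = 0 has a continuous solution u⁺ : [0,T⁺] → E₁ with max_{0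 ≤ t ≤ T⁺} ‖u⁺(t)‖ ≤ r⁺, and the successive approximations u₀ = 0, u_n(t) = u_{n−1}(t) − A⁻¹(F(u_{n−1},t)) converge to u⁺ uniformly on [0,T⁺]. -/
/-!
Kantorovich's method of majorants. Put `ψ ρ = ‖A⁻¹‖ f(ρ, T⁺)` and `rₙ = ψⁿ(0)`. Since `ψ` is
monotone and `ψ r⁺ = r⁺`, all `rₙ` lie in `[0, r⁺]`. With `Δ = u_{n+1} - uₙ = -A⁻¹ F(uₙ, ·)` one
has `F(u_{n+1}, t) = F(uₙ + Δ, t) - F(uₙ, t) - A (Δ t)`, and (E′) together with the mean value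
inequality along the segment bounds this by `f(r_{n+1}, T⁺) - f(rₙ, T⁺)`. By induction
`‖u_{n+1} - uₙ‖ ≤ r_{n+1} - rₙ`, so `(uₙ)` is Cauchy in `C([0, T⁺], E₁)`, and its limit is a fixed
point of the continuous iteration map, i.e. a solution, of norm at most `r⁺`.
-/

open Set Filter Topology

theorem cauchySeq_of_norm_sub_le_majorant {E : Type*} [SeminormedAddCommGroup E]
    {u : ℕ → E} {r : ℕ → ℝ} {c : ℝ} (hc : ∀ n, r n ≤ c)
    (h : ∀ n, ‖u (n + 1) - u n‖ ≤ r (n + 1) - r n) : CauchySeq u := by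
  refine cauchySeq_of_dist_le_of_summable (fun n => r (n + 1) - r n)
    (fun n => by rw [dist_comm, dist_eq_norm]; exact h n) ?_
  refine summable_of_sum_range_le (c := c - r 0) (fun n => (norm_nonneg _).trans (h n))
    fun n => ?_
  rw [Finset.sum_range_sub]
  linarith [hc n]

theorem norm_sub_sub_le_of_hasFDerivAt_majorant
    {X Y : Type*} [NormedAddCommGroup X] [NormedSpace ℝ X] [NormedAddCommGroup Y]
    [NormedSpace ℝ Y] {G : X → Y} {G' : X → X →L[ℝ] Y} {L : X →L[ℝ] Y} {φ φ' : ℝ → ℝ}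
    (hG : ∀ x, HasFDerivAt G (G' x) x)
    (hφ : ∀ ρ, 0 ≤ ρ → HasDerivWithinAt φ (φ' ρ) (Ici 0) ρ)
    (hG' : ∀ x ρ, ‖x‖ ≤ ρ → ‖G' x - L‖ ≤ φ' ρ)
    {x h : X} {a δ : ℝ} (hx : ‖x‖ ≤ a) (hh : ‖h‖ ≤ δ) :
    ‖G (x + h) - G x - L h‖ ≤ φ (a + δ) - φ a := by
  have ha : 0 ≤ a := (norm_nonneg x).trans hx
  have hδ : 0 ≤ δ := (norm_nonneg h).trans hh
  have hpath : ∀ s ∈ Icc (0 : ℝ) 1, ‖x + s • h‖ ≤ a + s * δ := fun s hs => calc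
    ‖x + s • h‖ ≤ ‖x‖ + s * ‖h‖ := by
      simpa [norm_smul, abs_of_nonneg hs.1] using norm_add_le x (s • h)
    _ ≤ a + s * δ := by gcongr; exact hs.1
  have hg : ∀ s : ℝ, HasDerivAt (fun s : ℝ => G (x + s • h) - G x - s • L h)
      ((G' (x + s • h) - L) h) s := fun s => by
    have hp : HasDerivAt (fun s : ℝ => x + s • h) h s := by
      simpa using ((hasDerivAt_id s).smul_const h).const_add x
    simpa using (((hG _).comp_hasDerivAt s hp).sub_const (G x)).fun_sub
      ((hasDerivAt_id s).smul_const (L h))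
  have hmaps : ∀ s, 0 ≤ s → MapsTo (fun s : ℝ => a + s * δ) (Ici s) (Ici 0) :=
    fun s hs s' hs' => mem_Ici.2 (add_nonneg ha (mul_nonneg (hs.trans hs') hδ))
  have hB : ∀ s, 0 ≤ s → HasDerivWithinAt (fun s => φ (a + s * δ) - φ a)
      (φ' (a + s * δ) * δ) (Ici s) s := fun s hs => by
    have haff : HasDerivWithinAt (fun s : ℝ => a + s * δ) δ (Ici s) s := by
      simpa using (((hasDerivAt_id s).mul_const δ).const_add a).hasDerivWithinAt
    exact ((hφ _ (hmaps s hs self_mem_Ici)).comp s haff (hmaps s hs)).sub_const _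
  have hφc : ContinuousOn φ (Ici 0) := fun ρ hρ => (hφ ρ hρ).continuousWithinAt
  have hBc : ContinuousOn (fun s => φ (a + s * δ) - φ a) (Icc 0 1) :=
    (ContinuousOn.comp (g := φ) hφc (by fun_prop)
      ((hmaps 0 le_rfl).mono_left Icc_subset_Ici_self)).sub continuousOn_const
  -- compare `G (x + s • h) - G x - s • L h` with the scalar majorant `φ (a + s * δ) - φ a`
  have hcomp := image_norm_le_of_norm_deriv_right_le_deriv_boundary'
    (fun s _ => (hg s).continuousAt.continuousWithinAt) (fun s _ => (hg s).hasDerivWithinAt)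
    (by simp) hBc (fun s hs => hB s hs.1) (fun s hs => ?_) (right_mem_Icc.2 zero_le_one)
  · simpa using hcomp
  · have hρ := hG' _ _ (hpath s (Ico_subset_Icc_self hs))
    calc ‖(G' (x + s • h) - L) h‖ ≤ ‖G' (x + s • h) - L‖ * ‖h‖ :=
          ContinuousLinearMap.le_opNorm _ _
      _ ≤ φ' (a + s * δ) * δ := mul_le_mul hρ hh (norm_nonneg _) ((norm_nonneg _).trans hρ)

section SuccessiveApproximations

variable {E₁ E₂ : Type*} [NormedAddCommGroup E₁] [NormedSpace ℝ E₁]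
  [NormedAddCommGroup E₂] [NormedSpace ℝ E₂] {T : ℝ}
  {A : E₁ →L[ℝ] E₂} {Ainv : E₂ →L[ℝ] E₁} {F : C(Icc (0:ℝ) T, E₁) → ℝ → E₂}

theorem norm_residual_le_majorant (hA : ∀ y, A (Ainv y) = y)
    {F' : C(Icc (0:ℝ) T, E₁) → ℝ → (C(Icc (0:ℝ) T, E₁) →L[ℝ] E₂)} {φ φ' : ℝ → ℝ}
    (hFd : ∀ u (t : Icc (0:ℝ) T), HasFDerivAt (fun v => F v t) (F' u t) u)
    (hE : ∀ u ρ (t : Icc (0:ℝ) T), ‖u‖ ≤ ρ →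
      ‖F' u t - A.comp (ContinuousMap.evalCLM ℝ t)‖ ≤ φ' ρ)
    (hφ : ∀ ρ, 0 ≤ ρ → HasDerivWithinAt φ (φ' ρ) (Ici 0) ρ)
    {v w : C(Icc (0:ℝ) T, E₁)} (hw : ∀ t, w t = v t - Ainv (F v t)) {a δ : ℝ}
    (hv : ‖v‖ ≤ a) (hwv : ‖w - v‖ ≤ δ) (t : Icc (0:ℝ) T) :
    ‖F w t‖ ≤ φ (a + δ) - φ a := by
  have h := norm_sub_sub_le_of_hasFDerivAt_majorant (hFd · t) hφ (fun u ρ => hE u ρ t) hv hwv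
  have hL : A.comp (ContinuousMap.evalCLM ℝ t) (w - v) = -F v t := by
    simp [hw, hA]
  rwa [add_sub_cancel, hL, sub_neg_eq_add, sub_add_cancel] at h

theorem norm_sub_le_of_residual_le [Nonempty (Icc (0:ℝ) T)] {v w : C(Icc (0:ℝ) T, E₁)}
    (hw : ∀ t, w t = v t - Ainv (F v t)) {c : ℝ} (hF : ∀ t : Icc (0:ℝ) T, ‖F v t‖ ≤ c) :
    ‖w - v‖ ≤ ‖Ainv‖ * c :=
  (ContinuousMap.norm_le_of_nonempty _).2 fun t => by
    rw [ContinuousMap.sub_apply, hw, sub_sub_cancel_left, norm_neg]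
    exact (Ainv.le_opNorm _).trans (mul_le_mul_of_nonneg_left (hF t) (norm_nonneg _))

theorem norm_approx_le_majorant [Nonempty (Icc (0:ℝ) T)] (hA : ∀ y, A (Ainv y) = y)
    {F' : C(Icc (0:ℝ) T, E₁) → ℝ → (C(Icc (0:ℝ) T, E₁) →L[ℝ] E₂)} {φ φ' : ℝ → ℝ}
    (hFd : ∀ u (t : Icc (0:ℝ) T), HasFDerivAt (fun v => F v t) (F' u t) u)
    (hE : ∀ u ρ (t : Icc (0:ℝ) T), ‖u‖ ≤ ρ →
      ‖F' u t - A.comp (ContinuousMap.evalCLM ℝ t)‖ ≤ φ' ρ)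
    (hφ : ∀ ρ, 0 ≤ ρ → HasDerivWithinAt φ (φ' ρ) (Ici 0) ρ)
    (hF0 : ∀ t : Icc (0:ℝ) T, ‖F 0 t‖ ≤ φ 0)
    {u : ℕ → C(Icc (0:ℝ) T, E₁)} (hu0 : u 0 = 0)
    (hu : ∀ n t, u (n + 1) t = u n t - Ainv (F (u n) t))
    {r : ℕ → ℝ} (hr0 : r 0 = 0) (hr : ∀ n, r (n + 1) = ‖Ainv‖ * φ (r n)) (n : ℕ) :
    ‖u n‖ ≤ r n ∧ ‖u (n + 1) - u n‖ ≤ r (n + 1) - r n := by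
  induction n with
  | zero => simpa [hu0, hr0, hr 0] using norm_sub_le_of_residual_le (hu 0) (hu0 ▸ hF0)
  | succ n ih =>
    refine ⟨?_, ?_⟩
    · calc ‖u (n + 1)‖ ≤ ‖u n‖ + ‖u (n + 1) - u n‖ := norm_le_norm_add_norm_sub' _ _
        _ ≤ r (n + 1) := by linarith [ih.1, ih.2]
    · have hF := norm_residual_le_majorant hA hFd hE hφ (hu n) ih.1 ih.2
      rw [add_sub_cancel] at hF
      calc ‖u (n + 1 + 1) - u (n + 1)‖ ≤ ‖Ainv‖ * (φ (r (n + 1)) - φ (r n)) :=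
            norm_sub_le_of_residual_le (hu (n + 1)) hF
        _ = r (n + 1 + 1) - r (n + 1) := by rw [hr (n + 1), hr n, mul_sub]

theorem residual_eq_zero_of_tendsto (hA : ∀ y, A (Ainv y) = y)
    (hFc : Continuous fun p : C(Icc (0:ℝ) T, E₁) × ℝ => F p.1 p.2)
    {u : ℕ → C(Icc (0:ℝ) T, E₁)} (hu : ∀ n t, u (n + 1) t = u n t - Ainv (F (u n) t))
    {x : C(Icc (0:ℝ) T, E₁)} (hlim : Tendsto u atTop (𝓝 x)) (t : Icc (0:ℝ) T) :
    F x t = 0 := by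
  have hstep : Continuous fun v : C(Icc (0:ℝ) T, E₁) => v t - Ainv (F v t) :=
    (continuous_eval_const t).sub
      (Ainv.continuous.comp (hFc.comp (continuous_id.prodMk continuous_const)))
  have hsucc : Tendsto (fun n => u (n + 1) t) atTop (𝓝 (x t)) :=
    ((continuous_eval_const t).tendsto x).comp (hlim.comp (tendsto_add_atTop_nat 1))
  have hfix : x t - Ainv (F x t) = x t := tendsto_nhds_unique
    (by simpa only [hu, Function.comp_def] using (hstep.tendsto x).comp hlim) hsucc
  rw [← hA (F x t), sub_eq_self.1 hfix, map_zero]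

end SuccessiveApproximations

theorem stmt_10_general
    {E₁ E₂ : Type*} [NormedAddCommGroup E₁] [NormedSpace ℝ E₁] [CompleteSpace E₁]
    [NormedAddCommGroup E₂] [NormedSpace ℝ E₂]
    (Tp rp : ℝ) (hTp : 0 < Tp) (hrp : 0 < rp)
    (A : E₁ →L[ℝ] E₂) (Ainv : E₂ →L[ℝ] E₁)
    (hA₂ : ∀ y, A (Ainv y) = y)
    (F : C(Set.Icc (0:ℝ) Tp, E₁) → ℝ → E₂)
    -- continuity of `F` in `(u,t)`
    (hFc : Continuous fun p : C(Set.Icc (0:ℝ) Tp, E₁) × ℝ => F p.1 p.2)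
    -- Fréchet differentiability of `F` in `u`
    (F' : C(Set.Icc (0:ℝ) Tp, E₁) → ℝ → (C(Set.Icc (0:ℝ) Tp, E₁) →L[ℝ] E₂))
    (hFd : ∀ (u : C(Set.Icc (0:ℝ) Tp, E₁)) (t : Set.Icc (0:ℝ) Tp),
      HasFDerivAt (fun v => F v (t : ℝ)) (F' u (t : ℝ)) u)
    (f f' : ℝ → ℝ → ℝ)
    -- condition (A′)
    (condA' : ∀ (r : ℝ) (u : C(Set.Icc (0:ℝ) Tp, E₁)) (t : Set.Icc (0:ℝ) Tp),
      (∀ s : Set.Icc (0:ℝ) Tp, (s : ℝ) ≤ (t : ℝ) → ‖u s‖ ≤ r) →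
      ‖F u (t : ℝ) - A (u t)‖ ≤ f r (t : ℝ))
    -- condition (E′), with the operator norm
    (condE' : ∀ (r : ℝ) (u : C(Set.Icc (0:ℝ) Tp, E₁)) (t : Set.Icc (0:ℝ) Tp),
      (∀ s : Set.Icc (0:ℝ) Tp, (s : ℝ) ≤ (t : ℝ) → ‖u s‖ ≤ r) →
      ‖F' u (t : ℝ) - A.comp (ContinuousMap.evalCLM ℝ t)‖ ≤ f' r (t : ℝ))
    -- condition (G)
    (hfnn : ∀ r ≥ (0:ℝ), ∀ t ≥ (0:ℝ), 0 ≤ f r t ∧ 0 ≤ f' r t)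
    (hfm : ∀ r₁ r₂ t₁ t₂ : ℝ, 0 ≤ r₁ → r₁ ≤ r₂ → 0 ≤ t₁ → t₁ ≤ t₂ →
      f r₁ t₁ ≤ f r₂ t₂ ∧ f' r₁ t₁ ≤ f' r₂ t₂)
    -- `f'` is the partial derivative of `f` in `r`
    (hfd : ∀ t ≥ (0:ℝ), ∀ r ∈ Set.Ici (0:ℝ),
      HasDerivWithinAt (fun ρ => f ρ t) (f' r t) (Set.Ici 0) r)
    -- the pair `(r⁺, T⁺)` solves the algebraic majorant system
    (hsys₁ : rp = ‖Ainv‖ * f rp Tp)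
    -- the successive approximations
    (useq : ℕ → C(Set.Icc (0:ℝ) Tp, E₁)) (hu0 : useq 0 = 0)
    (hurec : ∀ (n : ℕ) (t : Set.Icc (0:ℝ) Tp),
      useq (n + 1) t = useq n t - Ainv (F (useq n) (t : ℝ))) :
    ∃ uplus : C(Set.Icc (0:ℝ) Tp, E₁),
      (∀ t : Set.Icc (0:ℝ) Tp, F uplus (t : ℝ) = 0) ∧
      ‖uplus‖ ≤ rp ∧
      Filter.Tendsto useq Filter.atTop (nhds uplus) := by
  have : Nonempty (Icc (0:ℝ) Tp) := ⟨⟨0, le_rfl, hTp.le⟩⟩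
  set ψ : ℝ → ℝ := fun ρ => ‖Ainv‖ * f ρ Tp
  have hψ : MapsTo ψ (Icc 0 rp) (Icc 0 rp) := fun ρ hρ =>
    ⟨mul_nonneg (norm_nonneg _) (hfnn ρ hρ.1 Tp hTp.le).1, hsys₁ ▸ mul_le_mul_of_nonneg_left
      (hfm ρ rp Tp Tp hρ.1 hρ.2 hTp.le le_rfl).1 (norm_nonneg _)⟩
  have hr : ∀ n, ψ^[n] 0 ∈ Icc 0 rp := fun n => hψ.iterate n ⟨le_rfl, hrp.le⟩
  have hF0 : ∀ t : Icc (0:ℝ) Tp, ‖F 0 t‖ ≤ f 0 Tp := fun t => by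
    simpa using (condA' 0 0 t fun _ _ => by simp).trans
      (hfm 0 0 t Tp le_rfl le_rfl t.2.1 t.2.2).1
  have hE : ∀ u ρ (t : Icc (0:ℝ) Tp), ‖u‖ ≤ ρ →
      ‖F' u t - A.comp (ContinuousMap.evalCLM ℝ t)‖ ≤ f' ρ Tp := fun u ρ t hu =>
    (condE' ρ u t fun s _ => (u.norm_coe_le_norm s).trans hu).trans
      (hfm ρ ρ t Tp ((norm_nonneg u).trans hu) le_rfl t.2.1 t.2.2).2
  have hmaj := norm_approx_le_majorant hA₂ hFd hE (hfd Tp hTp.le) hF0 hu0 hurec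
    (r := fun n => ψ^[n] 0) rfl fun n => Function.iterate_succ_apply' ψ n 0
  obtain ⟨uplus, hlim⟩ := cauchySeq_tendsto_of_complete
    (cauchySeq_of_norm_sub_le_majorant (fun n => (hr n).2) fun n => (hmaj n).2)
  exact ⟨uplus, residual_eq_zero_of_tendsto hA₂ hFc hurec hlim,
    le_of_tendsto' hlim.norm fun n => (hmaj n).1.trans (hr n).2, hlim⟩

/-- **Theorem 2** (Sidorov–Sidorov, algebraic majorants). Under conditions (A′),
(E′), (G), if `(r⁺, T⁺)` solves the algebraic majorant system
`r = ‖A⁻¹‖ f(r,t)`, `1 = ‖A⁻¹‖ f_r′(r,t)`, then `F(u,t) = 0` has a continuous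
solution `u⁺ : [0,T⁺] → E₁` with `max_{0≤t≤T⁺} ‖u⁺(t)‖ ≤ r⁺`, obtained as the
uniform limit of the successive approximations `u₀ = 0`,
`u_n(t) = u_{n-1}(t) − A⁻¹ F(u_{n-1}, t)`. -/
theorem stmt_10
    {E₁ E₂ : Type*} [NormedAddCommGroup E₁] [NormedSpace ℝ E₁] [CompleteSpace E₁]
    [NormedAddCommGroup E₂] [NormedSpace ℝ E₂] [CompleteSpace E₂]
    (Tp rp : ℝ) (hTp : 0 < Tp) (hrp : 0 < rp)
    (A : E₁ →L[ℝ] E₂) (Ainv : E₂ →L[ℝ] E₁)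
    (hA₁ : ∀ x, Ainv (A x) = x) (hA₂ : ∀ y, A (Ainv y) = y)
    (F : C(Set.Icc (0:ℝ) Tp, E₁) → ℝ → E₂)
    -- continuity of `F` in `(u,t)`
    (hFc : Continuous fun p : C(Set.Icc (0:ℝ) Tp, E₁) × ℝ => F p.1 p.2)
    -- `F(0, 0) = 0`: the zero function yields `F`-value zero at `t = 0`
    (hF00 : F 0 0 = 0)
    -- Fréchet differentiability of `F` in `u`
    (F' : C(Set.Icc (0:ℝ) Tp, E₁) → ℝ → (C(Set.Icc (0:ℝ) Tp, E₁) →L[ℝ] E₂))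
    (hFd : ∀ (u : C(Set.Icc (0:ℝ) Tp, E₁)) (t : Set.Icc (0:ℝ) Tp),
      HasFDerivAt (fun v => F v (t : ℝ)) (F' u (t : ℝ)) u)
    (f f' : ℝ → ℝ → ℝ)
    -- condition (A′)
    (condA' : ∀ (r : ℝ) (u : C(Set.Icc (0:ℝ) Tp, E₁)) (t : Set.Icc (0:ℝ) Tp),
      (∀ s : Set.Icc (0:ℝ) Tp, (s : ℝ) ≤ (t : ℝ) → ‖u s‖ ≤ r) →
      ‖F u (t : ℝ) - A (u t)‖ ≤ f r (t : ℝ))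
    -- condition (E′), with the operator norm
    (condE' : ∀ (r : ℝ) (u : C(Set.Icc (0:ℝ) Tp, E₁)) (t : Set.Icc (0:ℝ) Tp),
      (∀ s : Set.Icc (0:ℝ) Tp, (s : ℝ) ≤ (t : ℝ) → ‖u s‖ ≤ r) →
      ‖F' u (t : ℝ) - A.comp (ContinuousMap.evalCLM ℝ t)‖ ≤ f' r (t : ℝ))
    -- condition (G)
    (hfnn : ∀ r ≥ (0:ℝ), ∀ t ≥ (0:ℝ), 0 ≤ f r t ∧ 0 ≤ f' r t)
    (hfm : ∀ r₁ r₂ t₁ t₂ : ℝ, 0 ≤ r₁ → r₁ ≤ r₂ → 0 ≤ t₁ → t₁ ≤ t₂ →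
      f r₁ t₁ ≤ f r₂ t₂ ∧ f' r₁ t₁ ≤ f' r₂ t₂)
    (hfpos : ∀ r > (0:ℝ), ∀ t > (0:ℝ), 0 < f r t ∧ 0 < f' r t)
    (hf00 : f 0 0 = 0)
    (hsmall : ‖Ainv‖ * f' 0 0 < 1)
    (hconv : ∀ t ≥ (0:ℝ), ConvexOn ℝ (Set.Ici 0) fun r => f r t)
    -- `f'` is the partial derivative of `f` in `r`
    (hfd : ∀ t ≥ (0:ℝ), ∀ r ∈ Set.Ici (0:ℝ),
      HasDerivWithinAt (fun ρ => f ρ t) (f' r t) (Set.Ici 0) r)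
    -- the pair `(r⁺, T⁺)` solves the algebraic majorant system
    (hsys₁ : rp = ‖Ainv‖ * f rp Tp)
    (hsys₂ : 1 = ‖Ainv‖ * f' rp Tp)
    -- the successive approximations
    (useq : ℕ → C(Set.Icc (0:ℝ) Tp, E₁)) (hu0 : useq 0 = 0)
    (hurec : ∀ (n : ℕ) (t : Set.Icc (0:ℝ) Tp),
      useq (n + 1) t = useq n t - Ainv (F (useq n) (t : ℝ))) :
    ∃ uplus : C(Set.Icc (0:ℝ) Tp, E₁),
      (∀ t : Set.Icc (0:ℝ) Tp, F uplus (t : ℝ) = 0) ∧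
      ‖uplus‖ ≤ rp ∧
      Filter.Tendsto useq Filter.atTop (nhds uplus) :=
  stmt_10_general Tp rp hTp hrp A Ainv hA₂ F hFc F' hFd f f' condA' condE' hfnn hfm hfd hsys₁ useq
    hu0 hurec
end

section
/- Suppose f(r,t) and f_r′(r,t) are nonnegative and monotone increasing in (r,t), r ↦ f(r,t) is convex for each t, and the operator condition (E′) holds: ‖F_u(u,t) − A∘ev_t‖ ≤ f_r′(r,t) (operator norm) whenever ‖u(s)‖ ≤ r for all s. Then for 0 ≤ r₁ ≤ r₂ and continuous functions u₁, u₂ with ‖u_i(t)‖ ≤ r_i (i = 1,2) and ‖u₂(t) − u₁(t)‖ ≤ r₂ − r₁ for all t ∈ [0,T⁺], the map L(u)(t) = u(t) − A⁻¹(F(u,t)) satisfies ‖L(u₂)(t) − L(u₁)(t)‖ ≤ ‖A⁻¹‖·(f(r₂,t) − f(r₁,t)) for all t ∈ [0,T⁺]. -/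
/-!
Write `L(u)(t) = -A⁻¹ (F(u,t) - A u(t))`. Along the segment `u_θ = u₁ + θ (u₂ - u₁)` one has
`‖u_θ(s)‖ ≤ r_θ := r₁ + θ (r₂ - r₁)`, so by (E′) the derivative of `θ ↦ F(u_θ,t) - A u_θ(t)` is
bounded by `f'(r_θ,t) (r₂ - r₁)`, the right derivative of `θ ↦ f(r_θ,t)`. The mean value
inequality with this majorant gives `‖(F(u₂,t) - A u₂(t)) - (F(u₁,t) - A u₁(t))‖ ≤ f(r₂,t) - f(r₁,t)`.
-/

open Set

theorem norm_add_smul_sub_le {E : Type*} [NormedAddCommGroup E] [NormedSpace ℝ E]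
    {x y : E} {a b θ : ℝ} (hx : ‖x‖ ≤ a) (hy : ‖y‖ ≤ b) (hθ : θ ∈ Icc (0 : ℝ) 1) :
    ‖x + θ • (y - x)‖ ≤ a + θ * (b - a) := by
  have h1θ : 0 ≤ 1 - θ := sub_nonneg.mpr hθ.2
  calc ‖x + θ • (y - x)‖ = ‖(1 - θ) • x + θ • y‖ := by
        rw [smul_sub, sub_smul, one_smul]; abel_nf
    _ ≤ (1 - θ) * ‖x‖ + θ * ‖y‖ := by
        refine (norm_add_le _ _).trans_eq ?_
        rw [norm_smul, norm_smul, Real.norm_of_nonneg h1θ, Real.norm_of_nonneg hθ.1]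
    _ ≤ (1 - θ) * a + θ * b := by gcongr; exact hθ.1
    _ = a + θ * (b - a) := by ring

theorem norm_sub_le_of_segment_majorant {X Y : Type*} [NormedAddCommGroup X] [NormedSpace ℝ X]
    [NormedAddCommGroup Y] [NormedSpace ℝ Y] {G : X → Y} {G' : X → X →L[ℝ] Y} {x y : X}
    {φ φ' : ℝ → ℝ}
    (hG : ∀ θ ∈ Icc (0 : ℝ) 1, HasFDerivAt G (G' (x + θ • (y - x))) (x + θ • (y - x)))
    (hφ : ContinuousOn φ (Icc 0 1)) (hφ' : ∀ θ ∈ Ico (0 : ℝ) 1, HasDerivWithinAt φ (φ' θ) (Ici θ) θ)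
    (hbound : ∀ θ ∈ Ico (0 : ℝ) 1, ‖G' (x + θ • (y - x))‖ * ‖y - x‖ ≤ φ' θ) :
    ‖G y - G x‖ ≤ φ 1 - φ 0 := by
  have hpath (θ : ℝ) : HasDerivAt (fun θ : ℝ => x + θ • (y - x)) (y - x) θ := by
    simpa using ((hasDerivAt_id θ).smul_const (y - x)).const_add x
  have hg (θ : ℝ) (hθ : θ ∈ Icc (0 : ℝ) 1) :
      HasDerivAt (fun θ : ℝ => G (x + θ • (y - x)) - G x) (G' (x + θ • (y - x)) (y - x)) θ :=
    ((hG θ hθ).comp_hasDerivAt θ (hpath θ)).sub_const (G x)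
  have key := image_norm_le_of_norm_deriv_right_le_deriv_boundary'
    (f := fun θ : ℝ => G (x + θ • (y - x)) - G x) (B := fun θ => φ θ - φ 0)
    (fun θ hθ => (hg θ hθ).continuousAt.continuousWithinAt)
    (fun θ hθ => (hg θ (Ico_subset_Icc_self hθ)).hasDerivWithinAt)
    (by simp) (hφ.sub continuousOn_const) (fun θ hθ => (hφ' θ hθ).sub_const (φ 0))
    (fun θ hθ => ((G' _).le_opNorm _).trans (hbound θ hθ))
    (right_mem_Icc.mpr zero_le_one)
  simpa using key

section Majorant

variable {f f' : ℝ → ℝ} {r₁ r₂ : ℝ}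

theorem continuousOn_comp_segment_of_hasDerivWithinAt
    (hf : ∀ r ∈ Ici (0 : ℝ), HasDerivWithinAt f (f' r) (Ici 0) r) (hr₁ : 0 ≤ r₁)
    (hr₁₂ : r₁ ≤ r₂) : ContinuousOn (fun θ => f (r₁ + θ * (r₂ - r₁))) (Icc 0 1) := by
  have hfc : ContinuousOn f (Ici 0) := fun r hr => (hf r hr).continuousWithinAt
  refine hfc.comp (by fun_prop) fun θ hθ => ?_
  exact add_nonneg hr₁ (mul_nonneg hθ.1 (sub_nonneg.mpr hr₁₂))

theorem hasDerivWithinAt_comp_segment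
    (hf : ∀ r ∈ Ici (0 : ℝ), HasDerivWithinAt f (f' r) (Ici 0) r) (hr₁ : 0 ≤ r₁)
    (hr₁₂ : r₁ ≤ r₂) {θ : ℝ} (hθ : 0 ≤ θ) :
    HasDerivWithinAt (fun θ => f (r₁ + θ * (r₂ - r₁))) (f' (r₁ + θ * (r₂ - r₁)) * (r₂ - r₁))
      (Ici θ) θ := by
  have hℓ : HasDerivAt (fun θ : ℝ => r₁ + θ * (r₂ - r₁)) (r₂ - r₁) θ := by
    simpa using ((hasDerivAt_id θ).mul_const (r₂ - r₁)).const_add r₁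
  have hmaps : MapsTo (fun θ : ℝ => r₁ + θ * (r₂ - r₁)) (Ici θ) (Ici 0) := fun σ hσ =>
    add_nonneg hr₁ (mul_nonneg (hθ.trans hσ) (sub_nonneg.mpr hr₁₂))
  exact (hf _ (hmaps self_mem_Ici)).comp θ hℓ.hasDerivWithinAt hmaps

end Majorant

theorem ContinuousLinearMap.norm_sub_sub_le_of_leftInverse {E₁ E₂ : Type*}
    [NormedAddCommGroup E₁] [NormedSpace ℝ E₁] [NormedAddCommGroup E₂] [NormedSpace ℝ E₂]
    {A : E₁ →L[ℝ] E₂} {Ainv : E₂ →L[ℝ] E₁} (hA : ∀ x, Ainv (A x) = x) (x₁ x₂ : E₁) (y₁ y₂ : E₂) :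
    ‖(x₂ - Ainv y₂) - (x₁ - Ainv y₁)‖ ≤ ‖Ainv‖ * ‖(y₂ - A x₂) - (y₁ - A x₁)‖ := by
  have h : (x₂ - Ainv y₂) - (x₁ - Ainv y₁) = -Ainv ((y₂ - A x₂) - (y₁ - A x₁)) := by
    simp only [map_sub, hA]; abel
  rw [h, norm_neg]
  exact Ainv.le_opNorm _
theorem stmt_12_general
    {E₁ E₂ : Type*} [NormedAddCommGroup E₁] [NormedSpace ℝ E₁]
    [NormedAddCommGroup E₂] [NormedSpace ℝ E₂]
    (Tp : ℝ)
    (A : E₁ →L[ℝ] E₂) (Ainv : E₂ →L[ℝ] E₁)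
    (hA₁ : ∀ x, Ainv (A x) = x)
    (F : C(Set.Icc (0:ℝ) Tp, E₁) → ℝ → E₂)
    -- Fréchet differentiability of `F` in `u`
    (F' : C(Set.Icc (0:ℝ) Tp, E₁) → ℝ → (C(Set.Icc (0:ℝ) Tp, E₁) →L[ℝ] E₂))
    (hFd : ∀ (u : C(Set.Icc (0:ℝ) Tp, E₁)) (t : Set.Icc (0:ℝ) Tp),
      HasFDerivAt (fun v => F v (t : ℝ)) (F' u (t : ℝ)) u)
    (f f' : ℝ → ℝ → ℝ)
    -- `f'` is the partial derivative of `f` in `r`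
    (hfd : ∀ t ≥ (0:ℝ), ∀ r ∈ Set.Ici (0:ℝ),
      HasDerivWithinAt (fun ρ => f ρ t) (f' r t) (Set.Ici 0) r)
    -- condition (E′), with the operator norm
    (condE' : ∀ (r : ℝ) (u : C(Set.Icc (0:ℝ) Tp, E₁)) (t : Set.Icc (0:ℝ) Tp),
      (∀ s : Set.Icc (0:ℝ) Tp, ‖u s‖ ≤ r) →
      ‖F' u (t : ℝ) - A.comp (ContinuousMap.evalCLM ℝ t)‖ ≤ f' r (t : ℝ)) :
    ∀ (r₁ r₂ : ℝ), 0 ≤ r₁ → r₁ ≤ r₂ →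
      ∀ u₁ u₂ : C(Set.Icc (0:ℝ) Tp, E₁),
        (∀ t : Set.Icc (0:ℝ) Tp, ‖u₁ t‖ ≤ r₁) →
        (∀ t : Set.Icc (0:ℝ) Tp, ‖u₂ t‖ ≤ r₂) →
        (∀ t : Set.Icc (0:ℝ) Tp, ‖u₂ t - u₁ t‖ ≤ r₂ - r₁) →
        ∀ t : Set.Icc (0:ℝ) Tp,
          ‖(u₂ t - Ainv (F u₂ (t : ℝ))) - (u₁ t - Ainv (F u₁ (t : ℝ)))‖ ≤
            ‖Ainv‖ * (f r₂ (t : ℝ) - f r₁ (t : ℝ)) := by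
  intro r₁ r₂ hr₁ hr₁₂ u₁ u₂ hu₁ hu₂ hu₁₂ t
  set Φ := A.comp (ContinuousMap.evalCLM ℝ t)
  have hw : ‖u₂ - u₁‖ ≤ r₂ - r₁ := (ContinuousMap.norm_le _ (sub_nonneg.mpr hr₁₂)).mpr hu₁₂
  have hsegment (θ : ℝ) (hθ : θ ∈ Icc (0 : ℝ) 1) (s : Icc (0 : ℝ) Tp) :
      ‖(u₁ + θ • (u₂ - u₁)) s‖ ≤ r₁ + θ * (r₂ - r₁) := by
    simpa using norm_add_smul_sub_le (hu₁ s) (hu₂ s) hθ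
  have key := norm_sub_le_of_segment_majorant (G := fun u => F u t - Φ u)
    (G' := fun u => F' u t - Φ) (x := u₁) (y := u₂)
    (fun θ _ => (hFd _ t).sub Φ.hasFDerivAt)
    (continuousOn_comp_segment_of_hasDerivWithinAt (hfd t t.2.1) hr₁ hr₁₂)
    (fun θ hθ => hasDerivWithinAt_comp_segment (hfd t t.2.1) hr₁ hr₁₂ hθ.1)
    (fun θ hθ => by
      have hop := condE' _ _ t (hsegment θ (Ico_subset_Icc_self hθ))
      exact mul_le_mul hop hw (norm_nonneg _) (hop.trans' (ContinuousLinearMap.opNorm_nonneg _)))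
  simp only [one_mul, zero_mul, add_zero, add_sub_cancel, Φ] at key
  refine (A.norm_sub_sub_le_of_leftInverse hA₁ _ _ _ _).trans ?_
  exact mul_le_mul_of_nonneg_left key (norm_nonneg _)

/-- (Sidorov–Sidorov, after Lemma 5.1 of Grebenikov–Ryabov). Under condition (E′)
and the monotonicity/convexity assumptions on the Lyapunov majorant `f`, if
`‖u_i(t)‖ ≤ r_i` and `‖u₂(t) − u₁(t)‖ ≤ r₂ − r₁` on `[0,T⁺]`, then the operator
`L(u)(t) = u(t) − A⁻¹ F(u,t)` satisfies
`‖L(u₂)(t) − L(u₁)(t)‖ ≤ ‖A⁻¹‖ (f(r₂,t) − f(r₁,t))`. -/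
theorem stmt_12
    {E₁ E₂ : Type*} [NormedAddCommGroup E₁] [NormedSpace ℝ E₁] [CompleteSpace E₁]
    [NormedAddCommGroup E₂] [NormedSpace ℝ E₂] [CompleteSpace E₂]
    (Tp : ℝ) (hTp : 0 < Tp)
    (A : E₁ →L[ℝ] E₂) (Ainv : E₂ →L[ℝ] E₁)
    (hA₁ : ∀ x, Ainv (A x) = x) (hA₂ : ∀ y, A (Ainv y) = y)
    (F : C(Set.Icc (0:ℝ) Tp, E₁) → ℝ → E₂)
    -- Fréchet differentiability of `F` in `u`
    (F' : C(Set.Icc (0:ℝ) Tp, E₁) → ℝ → (C(Set.Icc (0:ℝ) Tp, E₁) →L[ℝ] E₂))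
    (hFd : ∀ (u : C(Set.Icc (0:ℝ) Tp, E₁)) (t : Set.Icc (0:ℝ) Tp),
      HasFDerivAt (fun v => F v (t : ℝ)) (F' u (t : ℝ)) u)
    (f f' : ℝ → ℝ → ℝ)
    (hfnn : ∀ r ≥ (0:ℝ), ∀ t ≥ (0:ℝ), 0 ≤ f r t ∧ 0 ≤ f' r t)
    (hfm : ∀ r₁ r₂ t₁ t₂ : ℝ, 0 ≤ r₁ → r₁ ≤ r₂ → 0 ≤ t₁ → t₁ ≤ t₂ →
      f r₁ t₁ ≤ f r₂ t₂ ∧ f' r₁ t₁ ≤ f' r₂ t₂)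
    (hconv : ∀ t ≥ (0:ℝ), ConvexOn ℝ (Set.Ici 0) fun r => f r t)
    -- `f'` is the partial derivative of `f` in `r`
    (hfd : ∀ t ≥ (0:ℝ), ∀ r ∈ Set.Ici (0:ℝ),
      HasDerivWithinAt (fun ρ => f ρ t) (f' r t) (Set.Ici 0) r)
    -- condition (E′), with the operator norm
    (condE' : ∀ (r : ℝ) (u : C(Set.Icc (0:ℝ) Tp, E₁)) (t : Set.Icc (0:ℝ) Tp),
      (∀ s : Set.Icc (0:ℝ) Tp, ‖u s‖ ≤ r) →
      ‖F' u (t : ℝ) - A.comp (ContinuousMap.evalCLM ℝ t)‖ ≤ f' r (t : ℝ)) :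
    ∀ (r₁ r₂ : ℝ), 0 ≤ r₁ → r₁ ≤ r₂ →
      ∀ u₁ u₂ : C(Set.Icc (0:ℝ) Tp, E₁),
        (∀ t : Set.Icc (0:ℝ) Tp, ‖u₁ t‖ ≤ r₁) →
        (∀ t : Set.Icc (0:ℝ) Tp, ‖u₂ t‖ ≤ r₂) →
        (∀ t : Set.Icc (0:ℝ) Tp, ‖u₂ t - u₁ t‖ ≤ r₂ - r₁) →
        ∀ t : Set.Icc (0:ℝ) Tp,
          ‖(u₂ t - Ainv (F u₂ (t : ℝ))) - (u₁ t - Ainv (F u₁ (t : ℝ)))‖ ≤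
            ‖Ainv‖ * (f r₂ (t : ℝ) - f r₁ (t : ℝ)) :=
  stmt_12_general Tp A Ainv hA₁ F F' hFd f f' hfd condE'
end
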